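/- arXiv:math/0108056 — 8 statements merged into one kernel-verified Lean document; each statement's English description precedes it below -/
import Mathlib

section
/- Let p be a real number with 1 ≤ p < ∞ and p ≠ 2. Then the isometry group of the complex sequence space ℓ^p(ℕ) is algebraically reflexive: every continuous linear operator T on ℓ^p(ℕ) such that for each x there exists a surjective linear isometry L of ℓ^p(ℕ) with T x = L x is itself surjective (and hence a surjective linear isometry). -/
namespace LpReflexAux

lemma para (a b : ℂ) :
    ‖a + b‖ ^ (2:ℕ) + ‖a - b‖ ^ (2:ℕ) = 2 * (‖a‖ ^ (2:ℕ) + ‖b‖ ^ (2:ℕ)) := by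
  simp only [Complex.sq_norm, Complex.normSq_apply,
    Complex.add_re, Complex.add_im, Complex.sub_re, Complex.sub_im]
  ring

section piece
variable {q x y : ℝ}

lemma concave_piece (hq0 : 0 < q) (hq1 : q < 1) (hx : 0 < x) (hy : 0 < y) :
    x / (x + y) * (x + y) ^ q < x ^ q := by
  have hxy : (0:ℝ) < x + y := by linarith
  have hcc := Real.strictConcaveOn_rpow hq0 hq1
  have h0 : (0:ℝ) ^ q = 0 := Real.zero_rpow hq0.ne'
  have hpt : (x/(x+y)) • (x + y) + (y/(x+y)) • (0:ℝ) = x := by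
    rw [smul_eq_mul, smul_eq_mul, mul_zero, add_zero, div_mul_cancel₀ x hxy.ne']
  have h := hcc.2 (Set.mem_Ici.2 hxy.le) (Set.mem_Ici.2 le_rfl) hxy.ne'
    (div_pos hx hxy) (div_pos hy hxy) (by field_simp)
  rw [hpt] at h
  simpa [smul_eq_mul, h0] using h

lemma strict_subadd (hq0 : 0 < q) (hq1 : q < 1) (hx : 0 < x) (hy : 0 < y) :
    (x + y) ^ q < x ^ q + y ^ q := by
  have h1 := concave_piece hq0 hq1 hx hy
  have h2 := concave_piece hq0 hq1 hy hx
  rw [add_comm y x] at h2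
  have hxy : (0:ℝ) < x + y := by linarith
  have : x / (x + y) * (x + y) ^ q + y / (x + y) * (x + y) ^ q = (x + y) ^ q := by
    field_simp
  linarith

lemma subadd (hq0 : 0 < q) (hq1 : q < 1) (hx : 0 ≤ x) (hy : 0 ≤ y) :
    (x + y) ^ q ≤ x ^ q + y ^ q := by
  rcases hx.eq_or_lt with rfl | hx
  · simp [Real.zero_rpow hq0.ne']
  rcases hy.eq_or_lt with rfl | hy
  · simp [Real.zero_rpow hq0.ne']
  exact (strict_subadd hq0 hq1 hx hy).le

lemma convex_piece (hq1 : 1 < q) (hx : 0 < x) (hy : 0 < y) :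
    x ^ q < x / (x + y) * (x + y) ^ q := by
  have hxy : (0:ℝ) < x + y := by linarith
  have hcc := strictConvexOn_rpow hq1
  have h0 : (0:ℝ) ^ q = 0 := Real.zero_rpow (by positivity)
  have hpt : (x/(x+y)) • (x + y) + (y/(x+y)) • (0:ℝ) = x := by
    rw [smul_eq_mul, smul_eq_mul, mul_zero, add_zero, div_mul_cancel₀ x hxy.ne']
  have h := hcc.2 (Set.mem_Ici.2 hxy.le) (Set.mem_Ici.2 le_rfl) hxy.ne'
    (div_pos hx hxy) (div_pos hy hxy) (by field_simp)
  rw [hpt] at h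
  simpa [smul_eq_mul, h0] using h

lemma strict_superadd (hq1 : 1 < q) (hx : 0 < x) (hy : 0 < y) :
    x ^ q + y ^ q < (x + y) ^ q := by
  have h1 := convex_piece hq1 hx hy
  have h2 := convex_piece hq1 hy hx
  rw [add_comm y x] at h2
  have hxy : (0:ℝ) < x + y := by linarith
  have : x / (x + y) * (x + y) ^ q + y / (x + y) * (x + y) ^ q = (x + y) ^ q := by
    field_simp
  linarith

lemma superadd (hq1 : 1 < q) (hx : 0 ≤ x) (hy : 0 ≤ y) :
    x ^ q + y ^ q ≤ (x + y) ^ q := by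
  rcases hx.eq_or_lt with rfl | hx
  · simp [Real.zero_rpow (by positivity : q ≠ 0)]
  rcases hy.eq_or_lt with rfl | hy
  · simp [Real.zero_rpow (by positivity : q ≠ 0)]
  exact (strict_superadd hq1 hx hy).le

lemma midpoint_concave (hq0 : 0 ≤ q) (hq1 : q ≤ 1) (hx : 0 ≤ x) (hy : 0 ≤ y) :
    x ^ q + y ^ q ≤ 2 * ((x + y) / 2) ^ q := by
  have hcc := Real.concaveOn_rpow hq0 hq1
  have h := hcc.2 (Set.mem_Ici.2 hx) (Set.mem_Ici.2 hy)
    (by norm_num : (0:ℝ) ≤ 1/2) (by norm_num : (0:ℝ) ≤ 1/2) (by norm_num)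
  have hpt : (1/2 : ℝ) • x + (1/2 : ℝ) • y = (x + y) / 2 := by
    simp only [smul_eq_mul]; ring
  rw [hpt] at h
  simp only [smul_eq_mul] at h
  linarith

lemma midpoint_convex (hq1 : 1 ≤ q) (hx : 0 ≤ x) (hy : 0 ≤ y) :
    2 * ((x + y) / 2) ^ q ≤ x ^ q + y ^ q := by
  have hcc := convexOn_rpow hq1
  have h := hcc.2 (Set.mem_Ici.2 hx) (Set.mem_Ici.2 hy)
    (by norm_num : (0:ℝ) ≤ 1/2) (by norm_num : (0:ℝ) ≤ 1/2) (by norm_num)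
  have hpt : (1/2 : ℝ) • x + (1/2 : ℝ) • y = (x + y) / 2 := by
    simp only [smul_eq_mul]; ring
  rw [hpt] at h
  simp only [smul_eq_mul] at h
  linarith

end piece

section scalar
variable {p : ℝ}

lemma key_pow (hp0 : 0 < p) (z : ℂ) : ‖z‖ ^ p = ((‖z‖ ^ (2:ℕ)) : ℝ) ^ (p/2) := by
  rw [← Real.rpow_natCast ‖z‖ 2, ← Real.rpow_mul (norm_nonneg z)]
  norm_num
  ring_nf

lemma scalar_le (hp1 : 1 ≤ p) (hp2 : p < 2) (a b : ℂ) :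
    ‖a + b‖ ^ p + ‖a - b‖ ^ p ≤ 2 * (‖a‖ ^ p + ‖b‖ ^ p) := by
  have hp0 : (0:ℝ) < p := by linarith
  have hq0 : (0:ℝ) < p/2 := by linarith
  have hq1 : p/2 < 1 := by linarith
  have h1 := midpoint_concave hq0.le hq1.le (by positivity : (0:ℝ) ≤ ‖a+b‖^(2:ℕ))
    (by positivity : (0:ℝ) ≤ ‖a-b‖^(2:ℕ))
  have h2 := subadd hq0 hq1 (by positivity : (0:ℝ) ≤ ‖a‖^(2:ℕ))
    (by positivity : (0:ℝ) ≤ ‖b‖^(2:ℕ))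
  have h3 : (‖a+b‖^(2:ℕ) + ‖a-b‖^(2:ℕ)) / 2 = ‖a‖^(2:ℕ) + ‖b‖^(2:ℕ) := by
    rw [para]; ring
  rw [h3] at h1
  rw [key_pow hp0 (a+b), key_pow hp0 (a-b), key_pow hp0 a, key_pow hp0 b]
  linarith

lemma scalar_lt (hp1 : 1 ≤ p) (hp2 : p < 2) {a b : ℂ} (ha : a ≠ 0) (hb : b ≠ 0) :
    ‖a + b‖ ^ p + ‖a - b‖ ^ p < 2 * (‖a‖ ^ p + ‖b‖ ^ p) := by
  have hp0 : (0:ℝ) < p := by linarith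
  have hq0 : (0:ℝ) < p/2 := by linarith
  have hq1 : p/2 < 1 := by linarith
  have h1 := midpoint_concave hq0.le hq1.le (by positivity : (0:ℝ) ≤ ‖a+b‖^(2:ℕ))
    (by positivity : (0:ℝ) ≤ ‖a-b‖^(2:ℕ))
  have ha' : (0:ℝ) < ‖a‖^(2:ℕ) := by
    have : 0 < ‖a‖ := norm_pos_iff.2 ha
    positivity
  have hb' : (0:ℝ) < ‖b‖^(2:ℕ) := by
    have : 0 < ‖b‖ := norm_pos_iff.2 hb
    positivity
  have h2 := strict_subadd hq0 hq1 ha' hb'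
  have h3 : (‖a+b‖^(2:ℕ) + ‖a-b‖^(2:ℕ)) / 2 = ‖a‖^(2:ℕ) + ‖b‖^(2:ℕ) := by
    rw [para]; ring
  rw [h3] at h1
  rw [key_pow hp0 (a+b), key_pow hp0 (a-b), key_pow hp0 a, key_pow hp0 b]
  linarith

lemma scalar_ge (hp2 : 2 < p) (a b : ℂ) :
    2 * (‖a‖ ^ p + ‖b‖ ^ p) ≤ ‖a + b‖ ^ p + ‖a - b‖ ^ p := by
  have hp0 : (0:ℝ) < p := by linarith
  have hq1 : 1 < p/2 := by linarith
  have h1 := midpoint_convex hq1.le (by positivity : (0:ℝ) ≤ ‖a+b‖^(2:ℕ))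
    (by positivity : (0:ℝ) ≤ ‖a-b‖^(2:ℕ))
  have h2 := superadd hq1 (by positivity : (0:ℝ) ≤ ‖a‖^(2:ℕ))
    (by positivity : (0:ℝ) ≤ ‖b‖^(2:ℕ))
  have h3 : (‖a+b‖^(2:ℕ) + ‖a-b‖^(2:ℕ)) / 2 = ‖a‖^(2:ℕ) + ‖b‖^(2:ℕ) := by
    rw [para]; ring
  rw [h3] at h1
  rw [key_pow hp0 (a+b), key_pow hp0 (a-b), key_pow hp0 a, key_pow hp0 b]
  linarith

lemma scalar_gt (hp2 : 2 < p) {a b : ℂ} (ha : a ≠ 0) (hb : b ≠ 0) :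
    2 * (‖a‖ ^ p + ‖b‖ ^ p) < ‖a + b‖ ^ p + ‖a - b‖ ^ p := by
  have hp0 : (0:ℝ) < p := by linarith
  have hq1 : 1 < p/2 := by linarith
  have h1 := midpoint_convex hq1.le (by positivity : (0:ℝ) ≤ ‖a+b‖^(2:ℕ))
    (by positivity : (0:ℝ) ≤ ‖a-b‖^(2:ℕ))
  have ha' : (0:ℝ) < ‖a‖^(2:ℕ) := by
    have : 0 < ‖a‖ := norm_pos_iff.2 ha
    positivity
  have hb' : (0:ℝ) < ‖b‖^(2:ℕ) := by
    have : 0 < ‖b‖ := norm_pos_iff.2 hb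
    positivity
  have h2 := strict_superadd hq1 ha' hb'
  have h3 : (‖a+b‖^(2:ℕ) + ‖a-b‖^(2:ℕ)) / 2 = ‖a‖^(2:ℕ) + ‖b‖^(2:ℕ) := by
    rw [para]; ring
  rw [h3] at h1
  rw [key_pow hp0 (a+b), key_pow hp0 (a-b), key_pow hp0 a, key_pow hp0 b]
  linarith

lemma scalar_eq_of_disj (hp0 : 0 < p) {a b : ℂ} (h : a = 0 ∨ b = 0) :
    ‖a + b‖ ^ p + ‖a - b‖ ^ p = 2 * (‖a‖ ^ p + ‖b‖ ^ p) := by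
  rcases h with rfl | rfl <;>
    simp [Real.zero_rpow hp0.ne', norm_neg] <;> ring

lemma scalar_disj_of_eq (hp1 : 1 ≤ p) (hp2 : p ≠ 2) {a b : ℂ}
    (h : ‖a + b‖ ^ p + ‖a - b‖ ^ p = 2 * (‖a‖ ^ p + ‖b‖ ^ p)) : a = 0 ∨ b = 0 := by
  by_contra hc
  push_neg at hc
  rcases lt_or_gt_of_ne hp2 with hlt | hgt
  · exact absurd h (ne_of_lt (scalar_lt hp1 hlt hc.1 hc.2))
  · exact absurd h (ne_of_gt (scalar_gt hgt hc.1 hc.2))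

end scalar

section lpsec

variable {p : ℝ}

local notation "P" => ENNReal.ofReal p
local notation "X" => lp (fun _ : ℕ => ℂ) P

lemma toReal_P (hp1 : 1 ≤ p) : (ENNReal.ofReal p).toReal = p :=
  ENNReal.toReal_ofReal (by linarith)

lemma toReal_P_pos (hp1 : 1 ≤ p) : 0 < (ENNReal.ofReal p).toReal := by
  rw [toReal_P hp1]; linarith

lemma P_ne_top : (ENNReal.ofReal p) ≠ ⊤ := ENNReal.ofReal_ne_top

variable [Fact (1 ≤ ENNReal.ofReal p)]

lemma hasSum_norm' (hp1 : 1 ≤ p) (x : X) :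
    HasSum (fun n => ‖x n‖ ^ p) (‖x‖ ^ p) := by
  have := lp.hasSum_norm (toReal_P_pos hp1) x
  rwa [toReal_P hp1] at this

lemma exists_ne_zero (hp1 : 1 ≤ p) {x : X} (hx : x ≠ 0) : ∃ k, x k ≠ 0 := by
  by_contra hc
  push_neg at hc
  exact hx (lp.ext (funext fun n => hc n))

/-- disjoint supports -/
def Disj (x y : X) : Prop := ∀ n, x n = 0 ∨ y n = 0

lemma tsum_ptwise {f g : ℕ → ℝ} (h0 : ∀ n, 0 ≤ f n) (hle : ∀ n, f n ≤ g n)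
    (hg : Summable g) (h : ∑' n, f n = ∑' n, g n) : ∀ n, f n = g n := by
  intro n
  by_contra hn
  exact absurd h
    (ne_of_lt (Summable.tsum_lt_tsum_of_nonneg h0 hle (lt_of_le_of_ne (hle n) hn) hg))

lemma disj_iff_norm (hp1 : 1 ≤ p) (hp2 : p ≠ 2) (x y : X) :
    ‖x + y‖ ^ p + ‖x - y‖ ^ p = 2 * (‖x‖ ^ p + ‖y‖ ^ p) ↔ Disj x y := by
  have hp0 : (0:ℝ) < p := by linarith
  have hxy := hasSum_norm' hp1 (x + y)
  have hxy' := hasSum_norm' hp1 (x - y)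
  simp only [lp.coeFn_add, Pi.add_apply, lp.coeFn_sub, Pi.sub_apply] at hxy hxy'
  have hx := hasSum_norm' hp1 x
  have hy := hasSum_norm' hp1 y
  have hL : HasSum (fun n => ‖x n + y n‖ ^ p + ‖x n - y n‖ ^ p)
      (‖x + y‖ ^ p + ‖x - y‖ ^ p) := hxy.add hxy'
  have hR : HasSum (fun n => 2 * (‖x n‖ ^ p + ‖y n‖ ^ p))
      (2 * (‖x‖ ^ p + ‖y‖ ^ p)) := (hx.add hy).mul_left 2
  constructor
  · intro h
    intro n
    rcases lt_or_gt_of_ne hp2 with hlt | hgt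
    · have hpt := tsum_ptwise (f := fun n => ‖x n + y n‖ ^ p + ‖x n - y n‖ ^ p)
        (g := fun n => 2 * (‖x n‖ ^ p + ‖y n‖ ^ p))
        (fun n => by positivity) (fun n => scalar_le hp1 hlt _ _) hR.summable
        (by rw [hL.tsum_eq, hR.tsum_eq, h])
      exact scalar_disj_of_eq hp1 hp2 (hpt n)
    · have hpt := tsum_ptwise (g := fun n => ‖x n + y n‖ ^ p + ‖x n - y n‖ ^ p)
        (f := fun n => 2 * (‖x n‖ ^ p + ‖y n‖ ^ p))
        (fun n => by positivity) (fun n => scalar_ge hgt _ _) hL.summable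
        (by rw [hL.tsum_eq, hR.tsum_eq, h])
      exact scalar_disj_of_eq hp1 hp2 (hpt n).symm
  · intro hd
    have : (fun n => ‖x n + y n‖ ^ p + ‖x n - y n‖ ^ p)
        = fun n => 2 * (‖x n‖ ^ p + ‖y n‖ ^ p) :=
      funext fun n => scalar_eq_of_disj hp0 (hd n)
    rw [this] at hL
    exact hL.unique hR

lemma disj_map (hp1 : 1 ≤ p) (hp2 : p ≠ 2) (L : X ≃ₗᵢ[ℂ] X) (x y : X) :
    Disj x y ↔ Disj (L x) (L y) := by
  rw [← disj_iff_norm hp1 hp2, ← disj_iff_norm hp1 hp2]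
  have h1 : L x + L y = L (x + y) := (map_add L x y).symm
  have h2 : L x - L y = L (x - y) := (map_sub L x y).symm
  rw [h1, h2, L.norm_map, L.norm_map, L.norm_map, L.norm_map]

lemma single_apply' (i : ℕ) (a : ℂ) (j : ℕ) :
    (lp.single P i a : ∀ _ : ℕ, ℂ) j = if j = i then a else 0 := by
  by_cases h : j = i
  · subst h; simp [lp.single_apply_self]
  · simp [lp.single_apply_ne _ _ _ h, h]

lemma norm_single' (hp1 : 1 ≤ p) (a : ℂ) (i : ℕ) :
    ‖(lp.single P i a : X)‖ = ‖a‖ :=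
  lp.norm_single (E := fun _ : ℕ => ℂ) (p := P)
    (ENNReal.ofReal_pos.mpr (by linarith : (0:ℝ) < p)) i a

lemma single_add' (i : ℕ) (a b : ℂ) :
    (lp.single P i a : X) + lp.single P i b = lp.single P i (a + b) := by
  apply lp.ext
  funext j
  simp only [lp.coeFn_add, Pi.add_apply, single_apply']
  by_cases h : j = i <;> simp [h]

lemma norm_pair (hp1 : 1 ≤ p) {n m : ℕ} (hnm : n ≠ m) {u v : ℂ}
    (hu : ‖u‖ = 1) (hv : ‖v‖ = 1) :
    ‖(lp.single P n u : X) + lp.single P m v‖ ^ p = 2 := by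
  classical
  set f : ℕ → ℂ := fun i => if i = n then u else v with hf
  have hsum : (∑ i ∈ ({n, m} : Finset ℕ), (lp.single P i (f i) : X))
      = lp.single P n u + lp.single P m v := by
    rw [Finset.sum_pair hnm]
    simp [hf, hnm.symm]
  have := lp.norm_sum_single (toReal_P_pos hp1) f ({n, m} : Finset ℕ)
  rw [hsum, toReal_P hp1, Finset.sum_pair hnm] at this
  rw [this]
  simp [hf, hnm.symm, hu, hv]
  norm_num

/-- atoms -/
def Atom (x : X) : Prop :=
  x ≠ 0 ∧ ∀ u v : X, x = u + v → Disj u v → u = 0 ∨ v = 0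

lemma atom_map (hp1 : 1 ≤ p) (hp2 : p ≠ 2) (L : X ≃ₗᵢ[ℂ] X) {x : X} (hx : Atom x) :
    Atom (L x) := by
  refine ⟨fun h => hx.1 ?_, fun u v huv hd => ?_⟩
  · have := congrArg L.symm h
    simpa using this
  · have hx' : x = L.symm u + L.symm v := by
      have := congrArg L.symm huv
      simpa using this
    have hd' : Disj (L.symm u) (L.symm v) := by
      rw [disj_map hp1 hp2 L.symm] at hd
      exact hd
    rcases hx.2 _ _ hx' hd' with h | h
    · left
      have := congrArg L h
      simpa using this
    · right
      have := congrArg L h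
      simpa using this

lemma atom_single (hp1 : 1 ≤ p) {a : ℂ} (ha : a ≠ 0) (i : ℕ) :
    Atom (lp.single P i a : X) := by
  constructor
  · intro h
    have := congrFun (congrArg (fun z : X => (z : ∀ _ : ℕ, ℂ)) h) i
    simp [single_apply'] at this
    exact ha this
  · intro u v huv hd
    have hcoord : ∀ j, u j + v j = if j = i then a else 0 := by
      intro j
      have := congrFun (congrArg (fun z : X => (z : ∀ _ : ℕ, ℂ)) huv) j
      simp only [lp.coeFn_add, Pi.add_apply, single_apply'] at this
      rw [← this]
    have hz : ∀ j ≠ i, u j = 0 ∧ v j = 0 := by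
      intro j hj
      have h1 := hcoord j
      rw [if_neg hj] at h1
      rcases hd j with h | h
      · constructor
        · exact h
        · rw [h, zero_add] at h1; exact h1
      · constructor
        · rw [h, add_zero] at h1; exact h1
        · exact h
    rcases hd i with h | h
    · left
      apply lp.ext
      funext j
      by_cases hj : j = i
      · subst hj; simpa using h
      · simpa using (hz j hj).1
    · right
      apply lp.ext
      funext j
      by_cases hj : j = i
      · subst hj; simpa using h
      · simpa using (hz j hj).2

lemma atom_form (hp1 : 1 ≤ p) {x : X} (hx : Atom x) :
    ∃ k : ℕ, ∃ c : ℂ, c ≠ 0 ∧ x = lp.single P k c := by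
  obtain ⟨k, hk⟩ := exists_ne_zero hp1 hx.1
  refine ⟨k, x k, hk, ?_⟩
  have hdecomp : x = lp.single P k (x k) + (x - lp.single P k (x k)) := by abel
  have hd : Disj (lp.single P k (x k) : X) (x - lp.single P k (x k)) := by
    intro j
    by_cases hj : j = k
    · subst hj
      right
      simp [lp.coeFn_sub, single_apply']
    · left
      simp [single_apply', hj]
  rcases hx.2 _ _ hdecomp hd with h | h
  · exfalso
    have := congrFun (congrArg (fun z : X => (z : ∀ _ : ℕ, ℂ)) h) k
    simp [single_apply'] at this
    exact hk this
  · have : x - lp.single P k (x k) = 0 := h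
    have := sub_eq_zero.mp this
    exact this

lemma P_ne_zero : (ENNReal.ofReal p) ≠ 0 :=
  (lt_of_lt_of_le zero_lt_one (Fact.out : 1 ≤ P)).ne'

/-- evaluation at a coordinate as a continuous linear map -/
noncomputable def evCLM (k : ℕ) : X →L[ℂ] ℂ :=
  LinearMap.mkContinuous
    { toFun := fun x : X => x k
      map_add' := fun x y => by simp [lp.coeFn_add]
      map_smul' := fun c x => by simp [lp.coeFn_smul] }
    1 (fun x => by
      rw [one_mul]
      exact lp.norm_apply_le_norm P_ne_zero x k)

lemma evCLM_apply (k : ℕ) (x : X) : evCLM k x = x k := rfl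


lemma hasSum_coord (T : X →L[ℂ] X) (x : X) (k : ℕ) :
    HasSum (fun n => x n * (T (lp.single P n 1) : ∀ _ : ℕ, ℂ) k)
      ((T x : ∀ _ : ℕ, ℂ) k) := by
  have h1 := lp.hasSum_single (P_ne_top (p := p)) x
  have h2 := h1.mapL ((evCLM k).comp T)
  have heq : (fun n => ((evCLM k).comp T) (lp.single P n (x n)))
      = fun n => x n * (T (lp.single P n 1) : ∀ _ : ℕ, ℂ) k := by
    funext n
    have hs : lp.single P n (x n) = (x n • lp.single P n (1 : ℂ) : X) := by
      rw [← lp.single_smul]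
      norm_num
    rw [ContinuousLinearMap.comp_apply, hs, map_smul, map_smul, smul_eq_mul,
      evCLM_apply]
  rw [heq] at h2
  exact h2

lemma support_full (hp1 : 1 ≤ p) (hp2 : p ≠ 2) (L : X ≃ₗᵢ[ℂ] X) {x : X}
    (hx : ∀ n, x n ≠ 0) (k : ℕ) : (L x : ∀ _ : ℕ, ℂ) k ≠ 0 := by
  intro hk
  set u := L.symm (lp.single P k 1) with hu'
  have hu : Atom u := atom_map hp1 hp2 L.symm (atom_single hp1 one_ne_zero k)
  obtain ⟨j, c, hc, huj⟩ := atom_form hp1 hu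
  have hdk : Disj (L u) (L x) := by
    have hLu : L u = lp.single P k 1 := by simp [hu']
    rw [hLu]
    intro n
    by_cases hn : n = k
    · subst hn; right; exact hk
    · left; simp [single_apply', hn]
  have hct := (disj_map hp1 hp2 L u x).mpr hdk
  rcases hct j with h | h
  · rw [huj] at h
    simp [single_apply'] at h
    exact hc h
  · exact hx j h

lemma mem_geom (hp1 : 1 ≤ p) : Memℓp (fun n : ℕ => ((2:ℂ)⁻¹) ^ n) P := by
  apply memℓp_gen
  rw [toReal_P hp1]
  have heq : (fun n : ℕ => ‖((2:ℂ)⁻¹) ^ n‖ ^ p) = fun n : ℕ => (((2:ℝ)⁻¹) ^ p) ^ n := by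
    funext n
    rw [norm_pow, norm_inv]
    have h2 : ‖(2:ℂ)‖ = 2 := by simp
    rw [h2, ← Real.rpow_natCast ((2:ℝ)⁻¹) n, ← Real.rpow_mul (by norm_num),
      mul_comm, Real.rpow_mul (by norm_num), Real.rpow_natCast]
  rw [heq]
  exact summable_geometric_of_lt_one (by positivity)
    (Real.rpow_lt_one (by norm_num) (by norm_num) (by linarith))

end lpsec

end LpReflexAux


open LpReflexAux

/-- For 1 ≤ p < ∞, p ≠ 2, the isometry group of the complex sequence
space ℓ^p(ℕ) is algebraically reflexive: every continuous linear operator that agrees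
at each point with some surjective linear isometry is itself surjective. -/
theorem lp_nat_isometry_group_algebraically_reflexive
    (p : ℝ) (hp1 : 1 ≤ p) (hp2 : p ≠ 2) :
    letI : Fact (1 ≤ ENNReal.ofReal p) := ⟨ENNReal.one_le_ofReal.mpr hp1⟩
    ∀ T : lp (fun _ : ℕ => ℂ) (ENNReal.ofReal p) →L[ℂ] lp (fun _ : ℕ => ℂ) (ENNReal.ofReal p),
      (∀ x, ∃ L : lp (fun _ : ℕ => ℂ) (ENNReal.ofReal p) ≃ₗᵢ[ℂ]
          lp (fun _ : ℕ => ℂ) (ENNReal.ofReal p), T x = L x) →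
      Function.Surjective T := by
  letI : Fact (1 ≤ ENNReal.ofReal p) := ⟨ENNReal.one_le_ofReal.mpr hp1⟩
  intro T hT
  set P := ENNReal.ofReal p with hP
  -- images of basis vectors are scalar multiples of basis vectors
  have hTe' : ∀ n : ℕ, ∃ k : ℕ, ∃ c : ℂ, c ≠ 0 ∧ T (lp.single P n 1) = lp.single P k c := by
    intro n
    obtain ⟨L, hL⟩ := hT (lp.single P n 1)
    have ha := atom_map hp1 hp2 L (atom_single hp1 one_ne_zero n)
    rw [← hL] at ha
    exact atom_form hp1 ha
  choose σ c hc hTe using hTe'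
  have hnorm1 : ∀ n, ‖c n‖ = 1 := by
    intro n
    obtain ⟨L, hL⟩ := hT (lp.single P n 1)
    have h1 : ‖T (lp.single P n 1)‖ = ‖(lp.single P n 1 : lp (fun _ : ℕ => ℂ) P)‖ := by
      rw [hL, L.norm_map]
    rw [hTe n, norm_single' hp1, norm_single' hp1, norm_one] at h1
    exact h1
  -- injectivity
  have hinj : Function.Injective σ := by
    intro n m hnm
    by_contra hne
    have hTadd : T (lp.single P n 1 + lp.single P m 1) = lp.single P (σ n) (c n + c m) := by
      rw [map_add, hTe n, hTe m, ← hnm, single_add']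
    have hTsub : T (lp.single P n 1 - lp.single P m 1) = lp.single P (σ n) (c n - c m) := by
      rw [map_sub, hTe n, hTe m, ← hnm, sub_eq_add_neg, ← lp.single_neg, single_add',
        ← sub_eq_add_neg]
    have e1 : ‖c n + c m‖ ^ p = 2 := by
      obtain ⟨L, hL⟩ := hT (lp.single P n 1 + lp.single P m 1)
      have h1 : ‖T (lp.single P n 1 + lp.single P m 1)‖
          = ‖(lp.single P n 1 + lp.single P m 1 : lp (fun _ : ℕ => ℂ) P)‖ := by
        rw [hL, L.norm_map]
      rw [hTadd, norm_single' hp1] at h1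
      rw [h1]
      exact norm_pair hp1 hne norm_one norm_one
    have e2 : ‖c n - c m‖ ^ p = 2 := by
      obtain ⟨L, hL⟩ := hT (lp.single P n 1 - lp.single P m 1)
      have h1 : ‖T (lp.single P n 1 - lp.single P m 1)‖
          = ‖(lp.single P n 1 - lp.single P m 1 : lp (fun _ : ℕ => ℂ) P)‖ := by
        rw [hL, L.norm_map]
      rw [hTsub, norm_single' hp1] at h1
      have hre : (lp.single P n 1 : lp (fun _ : ℕ => ℂ) P) - lp.single P m 1
          = lp.single P n 1 + lp.single P m (-1) := by
        rw [sub_eq_add_neg, ← lp.single_neg]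
      rw [hre] at h1
      rw [h1]
      exact norm_pair hp1 hne norm_one (by simp)
    have heqn : ‖c n + c m‖ ^ p + ‖c n - c m‖ ^ p = 2 * (‖c n‖ ^ p + ‖c m‖ ^ p) := by
      rw [e1, e2, hnorm1, hnorm1, Real.one_rpow]
      norm_num
    rcases scalar_disj_of_eq hp1 hp2 heqn with h | h
    · exact hc n h
    · exact hc m h
  -- surjectivity of σ
  have hsurj : Function.Surjective σ := by
    intro k
    by_contra hk
    push_neg at hk
    set x₀ : lp (fun _ : ℕ => ℂ) P := ⟨fun n => ((2:ℂ)⁻¹) ^ n, mem_geom hp1⟩ with hx₀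
    obtain ⟨L, hL⟩ := hT x₀
    have hfull : ∀ n, (x₀ : ∀ _ : ℕ, ℂ) n ≠ 0 := by
      intro n
      show ((2:ℂ)⁻¹) ^ n ≠ 0
      exact pow_ne_zero n (inv_ne_zero two_ne_zero)
    have hk0 : (T x₀ : ∀ _ : ℕ, ℂ) k ≠ 0 := by
      rw [hL]
      exact support_full hp1 hp2 L hfull k
    have hs := hasSum_coord T x₀ k
    have hzero : (fun n => (x₀ : ∀ _ : ℕ, ℂ) n * (T (lp.single P n 1) : ∀ _ : ℕ, ℂ) k)
        = fun _ => (0:ℂ) := by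
      funext n
      rw [hTe n, single_apply', if_neg (fun h => hk n h.symm), mul_zero]
    rw [hzero] at hs
    exact hk0 (hs.unique hasSum_zero)
  -- construct preimages
  intro y
  have hsby : Summable fun k => ‖(y : ∀ _ : ℕ, ℂ) k‖ ^ p := by
    have := (lp.memℓp y).summable (toReal_P_pos hp1)
    rwa [toReal_P hp1] at this
  have hmem : Memℓp (fun n => (c n)⁻¹ * (y : ∀ _ : ℕ, ℂ) (σ n)) P := by
    apply memℓp_gen
    rw [toReal_P hp1]
    have heq : (fun n => ‖(c n)⁻¹ * (y : ∀ _ : ℕ, ℂ) (σ n)‖ ^ p)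
        = fun n => ‖(y : ∀ _ : ℕ, ℂ) (σ n)‖ ^ p := by
      funext n
      rw [norm_mul, norm_inv, hnorm1, inv_one, one_mul]
    rw [heq]
    have := hsby.comp_injective hinj
    exact this
  refine ⟨⟨fun n => (c n)⁻¹ * (y : ∀ _ : ℕ, ℂ) (σ n), hmem⟩, ?_⟩
  set x : lp (fun _ : ℕ => ℂ) P := ⟨fun n => (c n)⁻¹ * (y : ∀ _ : ℕ, ℂ) (σ n), hmem⟩ with hx
  apply lp.ext
  funext k
  obtain ⟨m, rfl⟩ := hsurj k
  have hs := hasSum_coord T x (σ m)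
  have heq : (fun n => (x : ∀ _ : ℕ, ℂ) n * (T (lp.single P n 1) : ∀ _ : ℕ, ℂ) (σ m))
      = fun n => if n = m then (x : ∀ _ : ℕ, ℂ) m * c m else 0 := by
    funext n
    rw [hTe n, single_apply']
    by_cases h : n = m
    · subst h
      rw [if_pos rfl, if_pos rfl]
    · rw [if_neg (fun hh => h (hinj hh.symm)), if_neg h, mul_zero]
  rw [heq] at hs
  have hval := hs.unique (hasSum_ite_eq m ((x : ∀ _ : ℕ, ℂ) m * c m))
  show (T x : ∀ _ : ℕ, ℂ) (σ m) = (y : ∀ _ : ℕ, ℂ) (σ m)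
  rw [hval]
  show (c m)⁻¹ * (y : ∀ _ : ℕ, ℂ) (σ m) * c m = (y : ∀ _ : ℕ, ℂ) (σ m)
  rw [mul_comm ((c m)⁻¹) _, mul_assoc, inv_mul_cancel₀ (hc m), mul_one]
end

section
/- Let S be the unilateral shift on the complex Banach space c₀ of null sequences, defined by (S x)(0) = 0 and (S x)(n+1) = x(n). Then for every x ∈ c₀ and every ε > 0 there exists a surjective linear isometry L of c₀ with ‖S x − L x‖ < ε, yet S is not surjective. Consequently, the isometry group of c₀ is not topologically reflexive. -/
/-! The shift `S` is an isometry whose range misses every sequence with nonzero `0`-th term.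
Given `x`, choose `N` beyond which `‖x n‖ ≤ δ`. Composing `x` with the cyclic permutation
`0 ↦ N`, `n + 1 ↦ n` (`n < N`) of `ℕ` gives a surjective isometry that agrees with `S x` at the
coordinates `1, …, N`; at every other coordinate both only involve terms of `x` past `N`, so the
distance to `S x` is at most `2 δ`. -/

open ZeroAtInfty Filter Topology

namespace Nat

def rotateDown (N : ℕ) : Equiv.Perm ℕ where
  toFun | 0 => N | n + 1 => if n < N then n else n + 1
  invFun m := if m < N then m + 1 else if m = N then 0 else m
  left_inv := by
    rintro (_ | n)
    · simp
    · dsimp only; split_ifs <;> omega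
  right_inv := by
    rintro (_ | m) <;> dsimp only <;> split_ifs <;> simp_all
    omega

@[simp]
theorem rotateDown_zero (N : ℕ) : rotateDown N 0 = N :=
  rfl

theorem rotateDown_succ_of_lt {N n : ℕ} (h : n < N) : rotateDown N (n + 1) = n :=
  if_pos h

theorem rotateDown_succ_of_le {N n : ℕ} (h : N ≤ n) : rotateDown N (n + 1) = n + 1 :=
  if_neg h.not_gt

end Nat

namespace ZeroAtInftyContinuousMap

section Norm

variable {α E : Type*} [TopologicalSpace α] [SeminormedAddCommGroup E]

theorem norm_apply_le (f : C₀(α, E)) (a : α) : ‖f a‖ ≤ ‖f‖ :=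
  f.toBCF.norm_coe_le_norm a

theorem norm_le {f : C₀(α, E)} {C : ℝ} (hC : 0 ≤ C) : ‖f‖ ≤ C ↔ ∀ a, ‖f a‖ ≤ C :=
  BoundedContinuousFunction.norm_le (f := f.toBCF) hC

theorem norm_comp_homeomorph {β : Type*} [TopologicalSpace β] (f : C₀(α, E)) (e : β ≃ₜ α) :
    ‖f.comp e.toCocompactMap‖ = ‖f‖ := by
  refine le_antisymm ((norm_le (norm_nonneg f)).2 fun b => f.norm_apply_le (e b)) ?_
  refine (norm_le (norm_nonneg _)).2 fun a => ?_
  simpa using (f.comp e.toCocompactMap).norm_apply_le (e.symm a)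

variable (𝕜 : Type*) [NormedField 𝕜] [NormedSpace 𝕜 E]

noncomputable def compHomeomorph {β : Type*} [TopologicalSpace β] (e : β ≃ₜ α) :
    C₀(α, E) ≃ₗᵢ[𝕜] C₀(β, E) where
  __ := compLinearMap (R := 𝕜) e.toCocompactMap
  invFun f := f.comp e.symm.toCocompactMap
  left_inv f := ext fun a => congrArg f (e.apply_symm_apply a)
  right_inv f := ext fun b => congrArg f (e.symm_apply_apply b)
  norm_map' f := norm_comp_homeomorph f e

end Norm

section Discrete

variable {α E : Type*} [TopologicalSpace α] [DiscreteTopology α] [Zero E] [TopologicalSpace E]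

def ofTendstoCofinite (f : α → E) (hf : Tendsto f cofinite (𝓝 0)) : C₀(α, E) :=
  ⟨⟨f, continuous_of_discreteTopology⟩, by rwa [cocompact_eq_cofinite]⟩

@[simp]
theorem ofTendstoCofinite_apply (f : α → E) (hf : Tendsto f cofinite (𝓝 0)) (a : α) :
    ofTendstoCofinite f hf a = f a :=
  rfl

theorem tendsto_cofinite (f : C₀(α, E)) : Tendsto f cofinite (𝓝 0) := by
  simpa [cocompact_eq_cofinite] using zero_at_infty f

theorem exists_apply_ne_zero [Nontrivial E] (a : α) : ∃ f : C₀(α, E), f a ≠ 0 := by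
  classical
  obtain ⟨v, hv⟩ := exists_ne (0 : E)
  refine ⟨ofTendstoCofinite (Pi.single a v) (tendsto_nhds_of_eventually_eq ?_), by simpa using hv⟩
  filter_upwards [eventually_cofinite_ne a] with b hb using Pi.single_eq_of_ne hb _

end Discrete

section Shift

variable {E : Type*} [SeminormedAddCommGroup E]

def shift (x : C₀(ℕ, E)) : C₀(ℕ, E) :=
  ofTendstoCofinite (fun | 0 => 0 | n + 1 => x n) <| by
    rw [Nat.cofinite_eq_atTop, ← tendsto_add_atTop_iff_nat 1]
    simpa [Nat.cofinite_eq_atTop] using x.tendsto_cofinite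

@[simp]
theorem shift_apply_zero (x : C₀(ℕ, E)) : shift x 0 = 0 :=
  rfl

@[simp]
theorem shift_apply_succ (x : C₀(ℕ, E)) (n : ℕ) : shift x (n + 1) = x n :=
  rfl

theorem norm_shift (x : C₀(ℕ, E)) : ‖shift x‖ = ‖x‖ := by
  refine le_antisymm ((norm_le (norm_nonneg x)).2 ?_)
    ((norm_le (norm_nonneg _)).2 fun n => (shift x).norm_apply_le (n + 1))
  rintro (_ | n)
  · simp
  · exact x.norm_apply_le n

theorem not_surjective_shift [Nontrivial E] :
    ¬Function.Surjective (shift : C₀(ℕ, E) → C₀(ℕ, E)) := by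
  intro hs
  obtain ⟨y, hy⟩ := exists_apply_ne_zero (E := E) 0
  obtain ⟨x, rfl⟩ := hs y
  exact hy (shift_apply_zero x)

theorem norm_shift_sub_comp_rotateDown_le (x : C₀(ℕ, E)) {N : ℕ} {δ : ℝ}
    (hδ : ∀ n ≥ N, ‖x n‖ ≤ δ) :
    ‖shift x - x.comp (Nat.rotateDown N).toHomeomorphOfDiscrete.toCocompactMap‖ ≤ 2 * δ := by
  have hδ₀ : 0 ≤ δ := (norm_nonneg _).trans (hδ N le_rfl)
  refine (norm_le (by positivity)).2 ?_
  rintro (_ | n) <;> simp only [Equiv.toHomeomorphOfDiscrete, coe_sub, Pi.sub_apply,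
    coe_comp_to_continuous_fun, Function.comp_apply, Homeomorph.toCocompactMap_toFun,
    Equiv.coe_toHomeomorph]
  · simpa using (hδ N le_rfl).trans (by linarith)
  · rcases lt_or_ge n N with hn | hn
    · simp [Nat.rotateDown_succ_of_lt hn, hδ₀]
    · simpa [Nat.rotateDown_succ_of_le hn, two_mul] using
        norm_sub_le_of_le (hδ n hn) (hδ (n + 1) (by omega))

variable (𝕜 : Type*) [NormedField 𝕜] [NormedSpace 𝕜 E]

theorem exists_linearIsometryEquiv_norm_shift_sub_lt (x : C₀(ℕ, E)) {ε : ℝ} (hε : 0 < ε) :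
    ∃ L : C₀(ℕ, E) ≃ₗᵢ[𝕜] C₀(ℕ, E), ‖shift x - L x‖ < ε := by
  have hx : ∀ᶠ n in atTop, ‖x n‖ ≤ ε / 3 := by
    rw [← Nat.cofinite_eq_atTop]
    exact (tendsto_zero_iff_norm_tendsto_zero.1 x.tendsto_cofinite).eventually
      (ge_mem_nhds (by positivity))
  obtain ⟨N, hN⟩ := eventually_atTop.1 hx
  exact ⟨compHomeomorph 𝕜 (Nat.rotateDown N).toHomeomorphOfDiscrete,
    (norm_shift_sub_comp_rotateDown_le x hN).trans_lt (by linarith)⟩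

def shiftₗᵢ : C₀(ℕ, E) →ₗᵢ[𝕜] C₀(ℕ, E) where
  toFun := shift
  map_add' _ _ := ext fun | 0 => (add_zero 0).symm | _ + 1 => rfl
  map_smul' c _ := ext fun | 0 => (smul_zero c).symm | _ + 1 => rfl
  norm_map' := norm_shift

end Shift

end ZeroAtInftyContinuousMap

open ZeroAtInftyContinuousMap

/-- The unilateral shift S on c₀ (the complex null sequences), given by
(S x)(0) = 0 and (S x)(n+1) = x(n), is not surjective, yet for every x and ε > 0 there
is a surjective linear isometry L of c₀ with ‖S x - L x‖ < ε.  Hence the isometry group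
of c₀ is not topologically reflexive. -/
theorem shift_witnesses_c0_isometry_group_not_topologically_reflexive :
    ∃ S : C₀(ℕ, ℂ) →L[ℂ] C₀(ℕ, ℂ),
      (∀ x : C₀(ℕ, ℂ), S x 0 = 0 ∧ ∀ n : ℕ, S x (n + 1) = x n) ∧
      (∀ (x : C₀(ℕ, ℂ)) (ε : ℝ), 0 < ε →
        ∃ L : C₀(ℕ, ℂ) ≃ₗᵢ[ℂ] C₀(ℕ, ℂ), ‖S x - L x‖ < ε) ∧
      ¬ Function.Surjective S :=
  ⟨(shiftₗᵢ ℂ).toContinuousLinearMap, fun _ => ⟨rfl, fun _ => rfl⟩,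
    fun x _ hε => exists_linearIsometryEquiv_norm_shift_sub_lt ℂ x hε, not_surjective_shift⟩
end

section
/- Let Γ be an uncountable index set and let p be a real number with 1 ≤ p < ∞. Then the isometry group of the complex Banach space ℓ^p(Γ) is not algebraically reflexive: there exists a continuous linear operator T on ℓ^p(Γ) which is not surjective, yet for every x ∈ ℓ^p(Γ) there is a surjective linear isometry L of ℓ^p(Γ) with T x = L x. -/
/-!
An uncountable `Γ` admits an injection `σ : Γ → Γ` that misses a point, and extension by zero
along `σ` is a non-surjective linear isometry `T` of `ℓ^p(Γ)`. An element `x` of `ℓ^p(Γ)` has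
countable support `S`; as `S` and `σ(S)` are countable in the uncountable `Γ`, their
complements are equinumerous, so `σ` restricted to `S` extends to a bijection `e` of `Γ`, and
`T x` is the image of `x` under the surjective isometry induced by `e`.
-/

open Function Set
open scoped ENNReal

theorem Infinite.exists_injective_not_surjective (ι : Type*) [Infinite ι] :
    ∃ σ : ι → ι, Injective σ ∧ ¬Surjective σ := by
  obtain ⟨e⟩ : Nonempty (Option ι ≃ ι) :=
    Cardinal.eq.1 (by rw [Cardinal.mk_option, Cardinal.add_one_eq (Cardinal.aleph0_le_mk ι)])
  refine ⟨e ∘ some, e.injective.comp (Option.some_injective ι), fun h => ?_⟩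
  obtain ⟨a, ha⟩ := h (e none)
  exact Option.some_ne_none a (e.injective ha)

theorem exists_equiv_eqOn_of_countable {ι : Type*} [Uncountable ι] {s : Set ι}
    (hs : s.Countable) {σ : ι → ι} (hσ : InjOn σ s) : ∃ e : ι ≃ ι, EqOn e σ s := by
  obtain ⟨e, he⟩ := Cardinal.extend_function_of_lt ⟨s.domRestrict σ, hσ.injective⟩
    (hs.le_aleph0.trans_lt (Cardinal.aleph0_lt_mk_iff.2 ‹_›)) ⟨Equiv.refl ι⟩
  exact ⟨e, fun a ha => he ⟨a, ha⟩⟩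

theorem Function.extend_zero_eq_of_eqOn_support {ι κ M : Type*} [Zero M] {σ τ : ι → κ}
    (hσ : Injective σ) (hτ : Injective τ) {f : ι → M} (h : EqOn σ τ (support f)) :
    extend σ f 0 = extend τ f 0 := by
  funext k
  by_cases hk : k ∈ σ '' support f
  · obtain ⟨a, ha, rfl⟩ := hk
    rw [hσ.extend_apply, h ha, hτ.extend_apply]
  · have hk' : k ∉ τ '' support f := h.image_eq ▸ hk
    rw [← support_extend_zero hσ, notMem_support] at hk
    rw [← support_extend_zero hτ, notMem_support] at hk'
    rw [hk, hk']

section Memℓp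

variable {ι κ E : Type*} [NormedAddCommGroup E] {p : ℝ≥0∞}

theorem norm_rpow_extend_zero {r : ℝ} (hr : 0 < r) {σ : ι → κ} (f : ι → E) :
    (fun k => ‖extend σ f 0 k‖ ^ r) = extend σ (fun i => ‖f i‖ ^ r) 0 := by
  funext k
  rw [apply_extend (‖·‖ ^ r)]
  congr
  funext k
  simp [Real.zero_rpow hr.ne']

theorem Memℓp.extend_zero (hp : 0 < p.toReal) {σ : ι → κ} (hσ : Injective σ) {f : ι → E}
    (hf : Memℓp f p) : Memℓp (extend σ f 0) p := by
  rw [memℓp_gen_iff hp] at hf ⊢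
  rwa [norm_rpow_extend_zero hp, summable_extend_zero hσ]

theorem Memℓp.countable_support (hp : 0 < p.toReal) {f : ι → E} (hf : Memℓp f p) :
    (support f).Countable := by
  refine ((memℓp_gen_iff hp).1 hf).countable_support.mono fun i hi => ?_
  exact (Real.rpow_pos_of_pos (norm_pos_iff.2 hi) _).ne'

end Memℓp

namespace lp

variable (𝕜 : Type*) {ι κ E : Type*} [NormedRing 𝕜] [NormedAddCommGroup E] [Module 𝕜 E]
  [IsBoundedSMul 𝕜 E] {p : ℝ≥0∞} [Fact (1 ≤ p)]

noncomputable def extendByZero (hp : 0 < p.toReal) {σ : ι → κ} (hσ : Injective σ) :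
    lp (fun _ : ι => E) p →ₗᵢ[𝕜] lp (fun _ : κ => E) p where
  toFun f := ⟨extend σ f 0, (lp.memℓp f).extend_zero hp hσ⟩
  map_add' f g := lp.ext <| show extend σ ⇑(f + g) 0 = extend σ f 0 + extend σ g 0 by
    rw [lp.coeFn_add, ← extend_add, add_zero]
  map_smul' c f := lp.ext <| show extend σ ⇑(c • f) 0 = c • extend σ f 0 by
    rw [lp.coeFn_smul, ← extend_smul, smul_zero]
  norm_map' f := by
    rw [lp.norm_eq_tsum_rpow hp, lp.norm_eq_tsum_rpow hp]
    exact congrArg (· ^ (1 / p.toReal)) <| by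
      rw [← tsum_extend_zero hσ, ← norm_rpow_extend_zero hp]
      rfl

@[simp]
theorem coe_extendByZero (hp : 0 < p.toReal) {σ : ι → κ} (hσ : Injective σ)
    (f : lp (fun _ : ι => E) p) : ⇑(extendByZero 𝕜 hp hσ f) = extend σ f 0 :=
  rfl

theorem extendByZero_not_surjective [Nontrivial E] (hp : 0 < p.toReal) {σ : ι → κ}
    (hσ : Injective σ) (hσ' : ¬Surjective σ) : ¬Surjective (extendByZero 𝕜 (E := E) hp hσ) := by
  classical
  intro h
  obtain ⟨k, hk⟩ := not_forall.1 hσ'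
  obtain ⟨v, hv⟩ := exists_ne (0 : E)
  obtain ⟨f, hf⟩ := h (lp.single p k v)
  have hfk := congr_fun (congr_arg (⇑) hf) k
  rw [coe_extendByZero, extend_apply' _ _ _ hk, lp.single_apply_self] at hfk
  exact hv hfk.symm

noncomputable def congrLeft (hp : 0 < p.toReal) (e : ι ≃ κ) :
    lp (fun _ : ι => E) p ≃ₗᵢ[𝕜] lp (fun _ : κ => E) p :=
  .ofSurjective (extendByZero 𝕜 hp e.injective) fun g =>
    ⟨extendByZero 𝕜 hp e.symm.injective g, lp.ext <| by ext; simp [Equiv.extend_apply]⟩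

theorem exists_extendByZero_eq_congrLeft [Uncountable ι] (hp : 0 < p.toReal) {σ : ι → ι}
    (hσ : Injective σ) (f : lp (fun _ : ι => E) p) :
    ∃ e : ι ≃ ι, extendByZero 𝕜 hp hσ f = congrLeft 𝕜 hp e f := by
  obtain ⟨e, he⟩ := exists_equiv_eqOn_of_countable
    ((lp.memℓp f).countable_support hp) hσ.injOn
  exact ⟨e, lp.ext (extend_zero_eq_of_eqOn_support hσ e.injective he.symm)⟩

end lp

/-- For an uncountable index set Γ and 1 ≤ p < ∞, the isometry group of
ℓ^p(Γ) is not algebraically reflexive: there is a non-surjective continuous linear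
operator agreeing at each point with some surjective linear isometry. -/
theorem lp_uncountable_isometry_group_not_algebraically_reflexive
    (Γ : Type*) [Uncountable Γ] (p : ℝ) (hp1 : 1 ≤ p) :
    letI : Fact (1 ≤ ENNReal.ofReal p) := ⟨ENNReal.one_le_ofReal.mpr hp1⟩
    ∃ T : lp (fun _ : Γ => ℂ) (ENNReal.ofReal p) →L[ℂ] lp (fun _ : Γ => ℂ) (ENNReal.ofReal p),
      ¬ Function.Surjective T ∧
      ∀ x, ∃ L : lp (fun _ : Γ => ℂ) (ENNReal.ofReal p) ≃ₗᵢ[ℂ]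
          lp (fun _ : Γ => ℂ) (ENNReal.ofReal p), T x = L x := by
  have : Fact (1 ≤ ENNReal.ofReal p) := ⟨ENNReal.one_le_ofReal.mpr hp1⟩
  have hp : 0 < (ENNReal.ofReal p).toReal := by
    rw [ENNReal.toReal_ofReal (by linarith)]
    linarith
  obtain ⟨σ, hσ, hσ'⟩ := Infinite.exists_injective_not_surjective Γ
  refine ⟨(lp.extendByZero ℂ hp hσ).toContinuousLinearMap,
    lp.extendByZero_not_surjective ℂ hp hσ hσ', fun x => ?_⟩
  obtain ⟨e, he⟩ := lp.exists_extendByZero_eq_congrLeft ℂ hp hσ x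
  exact ⟨lp.congrLeft ℂ hp e, he⟩
end

section
/- Let X be a complex normed space and let Y and Z be complementary closed subspaces of X (Y ∩ Z = {0} and Y + Z = X). Suppose there is a function Φ : ℝ × ℝ → ℝ such that ‖y + z‖ = Φ(‖y‖, ‖z‖) for all y ∈ Y and z ∈ Z. If the isometry group of X is algebraically reflexive, then the isometry group of Y (with the norm inherited from X) is algebraically reflexive too. -/
/-!
Because `‖y + z‖` depends only on `‖y‖` and `‖z‖`, every norm-preserving operator `A` on `Y`
extends to the norm-preserving, hence continuous, operator `A ⊕ id` on `X = Y ⊕ Z`. If `T` is a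
local surjective isometry of `Y`, then `T ⊕ id` is one of `X`: at `x` it agrees with `L ⊕ id`,
where `L` agrees with `T` at the `Y`-component of `x`. So `T ⊕ id` is surjective, and projecting
onto `Y`, so is `T`.
-/

open Submodule

noncomputable section

namespace LinearMap

variable {R X : Type*} [Ring R] [AddCommGroup X] [Module R X] {Y Z : Submodule R X}
  (h : IsCompl Y Z)

def extendByIdOfIsCompl (A : Y →ₗ[R] Y) : X →ₗ[R] X :=
  ofIsCompl h (Y.subtype ∘ₗ A) Z.subtype

theorem extendByIdOfIsCompl_apply (A : Y →ₗ[R] Y) (x : X) :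
    extendByIdOfIsCompl h A x = A (Y.projectionOnto Z h x) + Z.projection Y h.symm x := by
  simp [extendByIdOfIsCompl, ofIsCompl_eq_add]

theorem extendByIdOfIsCompl_apply_congr {A B : Y →ₗ[R] Y} {x : X}
    (hAB : A (Y.projectionOnto Z h x) = B (Y.projectionOnto Z h x)) :
    extendByIdOfIsCompl h A x = extendByIdOfIsCompl h B x := by
  rw [extendByIdOfIsCompl_apply, extendByIdOfIsCompl_apply, hAB]

theorem projectionOnto_extendByIdOfIsCompl (A : Y →ₗ[R] Y) (x : X) :
    Y.projectionOnto Z h (extendByIdOfIsCompl h A x) = A (Y.projectionOnto Z h x) := by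
  rw [extendByIdOfIsCompl_apply, map_add, projectionOnto_apply_left,
    projectionOnto_apply_of_mem_right h (projection_apply_mem h.symm x), add_zero]

theorem surjective_of_surjective_extendByIdOfIsCompl {A : Y →ₗ[R] Y}
    (hA : Function.Surjective (extendByIdOfIsCompl h A)) : Function.Surjective A := fun y ↦ by
  obtain ⟨x, hx⟩ := hA y
  exact ⟨Y.projectionOnto Z h x, by
    rw [← projectionOnto_extendByIdOfIsCompl, hx, projectionOnto_apply_left]⟩

theorem extendByIdOfIsCompl_comp (A B : Y →ₗ[R] Y) :
    extendByIdOfIsCompl h (A ∘ₗ B) = extendByIdOfIsCompl h A ∘ₗ extendByIdOfIsCompl h B :=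
  ofIsCompl_eq h (fun _ ↦ by simp [extendByIdOfIsCompl]) (fun _ ↦ by simp [extendByIdOfIsCompl])

theorem extendByIdOfIsCompl_id : extendByIdOfIsCompl h (id : Y →ₗ[R] Y) = id :=
  ofIsCompl_eq h (fun _ ↦ rfl) (fun _ ↦ rfl)

end LinearMap

open LinearMap in
def LinearEquiv.extendByIdOfIsCompl {R X : Type*} [Ring R] [AddCommGroup X] [Module R X]
    {Y Z : Submodule R X} (h : IsCompl Y Z) (L : Y ≃ₗ[R] Y) : X ≃ₗ[R] X :=
  ofLinearMap (LinearMap.extendByIdOfIsCompl h L.toLinearMap)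
    (LinearMap.extendByIdOfIsCompl h L.symm.toLinearMap)
    (by rw [← extendByIdOfIsCompl_comp, L.comp_symm, extendByIdOfIsCompl_id])
    (by rw [← extendByIdOfIsCompl_comp, L.symm_comp, extendByIdOfIsCompl_id])

section Isometry

variable {R X : Type*} [Ring R] [SeminormedAddCommGroup X] [Module R X] {Y Z : Submodule R X}
  (h : IsCompl Y Z) {Φ : ℝ × ℝ → ℝ}

theorem LinearMap.norm_extendByIdOfIsCompl (hΦ : ∀ y ∈ Y, ∀ z ∈ Z, ‖y + z‖ = Φ (‖y‖, ‖z‖))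
    {A : Y →ₗ[R] Y} (hA : ∀ y, ‖A y‖ = ‖y‖) (x : X) :
    ‖extendByIdOfIsCompl h A x‖ = ‖x‖ := by
  have hz := projection_apply_mem h.symm x
  calc ‖extendByIdOfIsCompl h A x‖
      = Φ (‖A (Y.projectionOnto Z h x)‖, ‖Z.projection Y h.symm x‖) := by
        rw [extendByIdOfIsCompl_apply, hΦ _ (A _).2 _ hz]; rfl
    _ = Φ (‖Y.projection Z h x‖, ‖Z.projection Y h.symm x‖) := by rw [hA]; rfl
    _ = ‖x‖ := by
        rw [← hΦ _ (projection_apply_mem h x) _ hz, projection_add_projection_eq_self]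

def LinearIsometry.extendByIdOfIsCompl (hΦ : ∀ y ∈ Y, ∀ z ∈ Z, ‖y + z‖ = Φ (‖y‖, ‖z‖))
    (A : Y →ₗᵢ[R] Y) : X →ₗᵢ[R] X :=
  ⟨LinearMap.extendByIdOfIsCompl h A.toLinearMap,
    LinearMap.norm_extendByIdOfIsCompl h hΦ A.norm_map⟩

def LinearIsometryEquiv.extendByIdOfIsCompl (hΦ : ∀ y ∈ Y, ∀ z ∈ Z, ‖y + z‖ = Φ (‖y‖, ‖z‖))
    (L : Y ≃ₗᵢ[R] Y) : X ≃ₗᵢ[R] X :=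
  ⟨LinearEquiv.extendByIdOfIsCompl h L.toLinearEquiv,
    LinearMap.norm_extendByIdOfIsCompl (A := L.toLinearEquiv.toLinearMap) h hΦ L.norm_map⟩

end Isometry

end

theorem isometry_group_of_summand_algebraically_reflexive_general
    (X : Type*) [NormedAddCommGroup X] [NormedSpace ℂ X]
    (Y Z : Submodule ℂ X)
    (hcompl : IsCompl Y Z)
    (Φ : ℝ × ℝ → ℝ) (hΦ : ∀ y ∈ Y, ∀ z ∈ Z, ‖y + z‖ = Φ (‖y‖, ‖z‖))
    (hX : ∀ T : X →L[ℂ] X, (∀ x : X, ∃ L : X ≃ₗᵢ[ℂ] X, T x = L x) → Function.Surjective T) :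
    ∀ T : Y →L[ℂ] Y, (∀ y : Y, ∃ L : Y ≃ₗᵢ[ℂ] Y, T y = L y) → Function.Surjective T := by
  intro T hT
  have hT_norm : ∀ y, ‖T y‖ = ‖y‖ := fun y ↦ by
    obtain ⟨L, hL⟩ := hT y
    rw [hL, L.norm_map]
  let S : X →L[ℂ] X :=
    (LinearIsometry.extendByIdOfIsCompl hcompl hΦ ⟨T.toLinearMap, hT_norm⟩).toContinuousLinearMap
  have hS : ∀ x, ∃ L : X ≃ₗᵢ[ℂ] X, S x = L x := fun x ↦ by
    obtain ⟨L, hL⟩ := hT (Y.projectionOnto Z hcompl x)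
    exact ⟨LinearIsometryEquiv.extendByIdOfIsCompl hcompl hΦ L,
      LinearMap.extendByIdOfIsCompl_apply_congr hcompl hL⟩
  exact LinearMap.surjective_of_surjective_extendByIdOfIsCompl hcompl (hX S hS)

/-- If X = Y ⊕ Z with ‖y + z‖ = Φ(‖y‖, ‖z‖) for all y ∈ Y, z ∈ Z, and the
isometry group of X is algebraically reflexive, then so is the isometry group of Y. -/
theorem isometry_group_of_summand_algebraically_reflexive
    (X : Type*) [NormedAddCommGroup X] [NormedSpace ℂ X]
    (Y Z : Submodule ℂ X) (hYc : IsClosed (Y : Set X)) (hZc : IsClosed (Z : Set X))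
    (hcompl : IsCompl Y Z)
    (Φ : ℝ × ℝ → ℝ) (hΦ : ∀ y ∈ Y, ∀ z ∈ Z, ‖y + z‖ = Φ (‖y‖, ‖z‖))
    (hX : ∀ T : X →L[ℂ] X, (∀ x : X, ∃ L : X ≃ₗᵢ[ℂ] X, T x = L x) → Function.Surjective T) :
    ∀ T : Y →L[ℂ] Y, (∀ y : Y, ∃ L : Y ≃ₗᵢ[ℂ] Y, T y = L y) → Function.Surjective T :=
  isometry_group_of_summand_algebraically_reflexive_general X Y Z hcompl Φ hΦ hX
end

section
/- Let (Ω, μ) be a measure space, let p be a real number with 1 ≤ p < ∞ and p ≠ 2, and let f, g ∈ L^p(μ) be complex-valued. Then f and g have almost disjoint supports (i.e., f·g = 0 almost everywhere) if and only if ‖f + g‖_p^p + ‖f − g‖_p^p = 2(‖f‖_p^p + ‖g‖_p^p). -/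
/-!
Put `r = p / 2`, `a = ‖u + v‖²`, `b = ‖u - v‖²`, `x = ‖u‖²`, `y = ‖v‖²`. The parallelogram law
gives `a + b = 2 (x + y)`, so for `r < 1` concavity and strict subadditivity of `t ↦ tʳ` give
`aʳ + bʳ ≤ 2 (x + y)ʳ < 2 (xʳ + yʳ)` when `u, v ≠ 0`; for `r > 1` both inequalities reverse.
Hence `(p - 2) (‖u + v‖ᵖ + ‖u - v‖ᵖ - 2 (‖u‖ᵖ + ‖v‖ᵖ))` is nonnegative and vanishes exactly when
`u = 0` or `v = 0`. Evaluated at `f ω, g ω` it integrates to `(p - 2)` times the same expression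
in the `Lᵖ` norms, and a nonnegative integrable function has integral zero iff it vanishes a.e.
-/

open MeasureTheory

lemma Real.mul_rpow_sub_one {x : ℝ} (hx : 0 < x) (r : ℝ) : x * x ^ (r - 1) = x ^ r := by
  rw [Real.rpow_sub_one hx.ne', mul_div_cancel₀ _ hx.ne']

section Scalar

variable {r x y a b : ℝ}

lemma Real.rpow_add_lt_rpow_add_rpow (hx : 0 < x) (hy : 0 < y) (hr : r < 1) :
    (x + y) ^ r < x ^ r + y ^ r := by
  have hxy : 0 < x + y := by linarith
  have hx' : (x + y) ^ (r - 1) < x ^ (r - 1) :=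
    Real.rpow_lt_rpow_of_neg hx (by linarith) (by linarith)
  have hy' : (x + y) ^ (r - 1) < y ^ (r - 1) :=
    Real.rpow_lt_rpow_of_neg hy (by linarith) (by linarith)
  calc (x + y) ^ r = x * (x + y) ^ (r - 1) + y * (x + y) ^ (r - 1) := by
        rw [← add_mul, Real.mul_rpow_sub_one hxy]
    _ < x * x ^ (r - 1) + y * y ^ (r - 1) := by gcongr
    _ = x ^ r + y ^ r := by rw [Real.mul_rpow_sub_one hx, Real.mul_rpow_sub_one hy]

lemma Real.rpow_add_rpow_lt_rpow_add (hx : 0 < x) (hy : 0 < y) (hr : 1 < r) :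
    x ^ r + y ^ r < (x + y) ^ r := by
  have hxy : 0 < x + y := by linarith
  have hx' : x ^ (r - 1) < (x + y) ^ (r - 1) :=
    Real.rpow_lt_rpow hx.le (by linarith) (by linarith)
  have hy' : y ^ (r - 1) < (x + y) ^ (r - 1) :=
    Real.rpow_lt_rpow hy.le (by linarith) (by linarith)
  calc x ^ r + y ^ r = x * x ^ (r - 1) + y * y ^ (r - 1) := by
        rw [Real.mul_rpow_sub_one hx, Real.mul_rpow_sub_one hy]
    _ < x * (x + y) ^ (r - 1) + y * (x + y) ^ (r - 1) := by gcongr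
    _ = (x + y) ^ r := by rw [← add_mul, Real.mul_rpow_sub_one hxy]

lemma Real.rpow_add_rpow_le_two_mul_rpow_half_add (ha : 0 ≤ a) (hb : 0 ≤ b) (hr0 : 0 ≤ r)
    (hr1 : r ≤ 1) : a ^ r + b ^ r ≤ 2 * ((a + b) / 2) ^ r := by
  have h := (Real.concaveOn_rpow hr0 hr1).2 (Set.mem_Ici.2 ha) (Set.mem_Ici.2 hb)
    (by norm_num : (0 : ℝ) ≤ 1 / 2) (by norm_num : (0 : ℝ) ≤ 1 / 2) (by norm_num)
  have hmid : 1 / 2 * a + 1 / 2 * b = (a + b) / 2 := by ring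
  simp only [smul_eq_mul, hmid] at h
  linarith

lemma Real.two_mul_rpow_half_add_le_rpow_add_rpow (ha : 0 ≤ a) (hb : 0 ≤ b) (hr : 1 ≤ r) :
    2 * ((a + b) / 2) ^ r ≤ a ^ r + b ^ r := by
  have h := (convexOn_rpow hr).2 (Set.mem_Ici.2 ha) (Set.mem_Ici.2 hb)
    (by norm_num : (0 : ℝ) ≤ 1 / 2) (by norm_num : (0 : ℝ) ≤ 1 / 2) (by norm_num)
  have hmid : 1 / 2 * a + 1 / 2 * b = (a + b) / 2 := by ring
  simp only [smul_eq_mul, hmid] at h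
  linarith

lemma Real.rpow_add_rpow_lt_two_mul_rpow_add_rpow (ha : 0 ≤ a) (hb : 0 ≤ b) (hx : 0 < x)
    (hy : 0 < y) (hab : a + b = 2 * (x + y)) (hr0 : 0 < r) (hr1 : r < 1) :
    a ^ r + b ^ r < 2 * (x ^ r + y ^ r) := by
  have hmid := Real.rpow_add_rpow_le_two_mul_rpow_half_add ha hb hr0.le hr1.le
  rw [hab, mul_div_cancel_left₀ _ two_ne_zero] at hmid
  linarith [Real.rpow_add_lt_rpow_add_rpow hx hy hr1]

lemma Real.two_mul_rpow_add_rpow_lt_rpow_add_rpow (ha : 0 ≤ a) (hb : 0 ≤ b) (hx : 0 < x)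
    (hy : 0 < y) (hab : a + b = 2 * (x + y)) (hr : 1 < r) :
    2 * (x ^ r + y ^ r) < a ^ r + b ^ r := by
  have hmid := Real.two_mul_rpow_half_add_le_rpow_add_rpow ha hb hr.le
  rw [hab, mul_div_cancel_left₀ _ two_ne_zero] at hmid
  linarith [Real.rpow_add_rpow_lt_rpow_add hx hy hr]

end Scalar

section Defect

variable {E : Type*} {p : ℝ}

noncomputable def parallelogramDefect [SeminormedAddCommGroup E] (p : ℝ) (u v : E) : ℝ :=
  ‖u + v‖ ^ p + ‖u - v‖ ^ p - 2 * (‖u‖ ^ p + ‖v‖ ^ p)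

lemma parallelogramDefect_zero_left [SeminormedAddCommGroup E] (hp : p ≠ 0) (v : E) :
    parallelogramDefect p 0 v = 0 := by
  simp only [parallelogramDefect, zero_add, zero_sub, norm_neg, norm_zero, Real.zero_rpow hp]
  ring

lemma parallelogramDefect_zero_right [SeminormedAddCommGroup E] (hp : p ≠ 0) (u : E) :
    parallelogramDefect p u 0 = 0 := by
  simp only [parallelogramDefect, add_zero, sub_zero, norm_zero, Real.zero_rpow hp]
  ring

variable [NormedAddCommGroup E] [InnerProductSpace ℝ E]

lemma mul_parallelogramDefect_pos (hp0 : 0 < p) (hp2 : p ≠ 2) {u v : E} (hu : u ≠ 0)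
    (hv : v ≠ 0) : 0 < (p - 2) * parallelogramDefect p u v := by
  have hsq (t : ℝ) (ht : 0 ≤ t) : t ^ p = (t ^ 2) ^ (p / 2) := by
    rw [← Real.rpow_natCast, ← Real.rpow_mul ht, Nat.cast_ofNat, mul_div_cancel₀ _ two_ne_zero]
  have hx : 0 < ‖u‖ ^ 2 := by positivity
  have hy : 0 < ‖v‖ ^ 2 := by positivity
  have hlaw := parallelogram_law_with_norm ℝ u v
  rw [parallelogramDefect, hsq _ (norm_nonneg (u + v)), hsq _ (norm_nonneg (u - v)),
    hsq _ (norm_nonneg u), hsq _ (norm_nonneg v)]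
  rcases lt_or_gt_of_ne hp2 with hlt | hgt
  · refine mul_pos_of_neg_of_neg (by linarith) (sub_neg.2 ?_)
    exact Real.rpow_add_rpow_lt_two_mul_rpow_add_rpow (by positivity) (by positivity) hx hy hlaw
      (by linarith) (by linarith)
  · refine mul_pos (by linarith) (sub_pos.2 ?_)
    exact Real.two_mul_rpow_add_rpow_lt_rpow_add_rpow (by positivity) (by positivity) hx hy hlaw
      (by linarith)

lemma mul_parallelogramDefect_nonneg (hp0 : 0 < p) (u v : E) :
    0 ≤ (p - 2) * parallelogramDefect p u v := by
  rcases eq_or_ne u 0 with rfl | hu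
  · simp [parallelogramDefect_zero_left hp0.ne']
  rcases eq_or_ne v 0 with rfl | hv
  · simp [parallelogramDefect_zero_right hp0.ne']
  rcases eq_or_ne p 2 with rfl | hp2
  · simp
  exact (mul_parallelogramDefect_pos hp0 hp2 hu hv).le

lemma parallelogramDefect_eq_zero_iff (hp0 : 0 < p) (hp2 : p ≠ 2) {u v : E} :
    parallelogramDefect p u v = 0 ↔ u = 0 ∨ v = 0 := by
  refine ⟨fun h => ?_, ?_⟩
  · by_contra! huv
    simpa [h] using mul_parallelogramDefect_pos hp0 hp2 huv.1 huv.2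
  · rintro (rfl | rfl)
    · exact parallelogramDefect_zero_left hp0.ne' v
    · exact parallelogramDefect_zero_right hp0.ne' u

end Defect

lemma integral_eq_zero_iff_of_mul_nonneg {Ω : Type*} [MeasurableSpace Ω] {μ : Measure Ω}
    {φ : Ω → ℝ} {c : ℝ} (hc : c ≠ 0) (hφ : Integrable φ μ) (hcφ : ∀ᵐ ω ∂μ, 0 ≤ c * φ ω) :
    ∫ ω, φ ω ∂μ = 0 ↔ φ =ᵐ[μ] 0 := by
  rw [← mul_eq_zero_iff_left hc, ← integral_const_mul,
    integral_eq_zero_iff_of_nonneg_ae hcφ (hφ.const_mul c)]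
  refine Filter.eventually_congr (ae_of_all _ fun ω => ?_)
  simp [hc]

namespace MeasureTheory.Lp

variable {Ω E : Type*} [MeasurableSpace Ω] {μ : Measure Ω} [NormedAddCommGroup E] {p : ℝ}

lemma integrable_norm_rpow (hp : 0 < p) (f : Lp E (ENNReal.ofReal p) μ) :
    Integrable (fun ω => ‖f ω‖ ^ p) μ := by
  simpa [ENNReal.toReal_ofReal hp.le] using
    (Lp.memLp f).integrable_norm_rpow (by simpa using hp) ENNReal.ofReal_ne_top

lemma norm_rpow_eq_integral (hp : 0 < p) (f : Lp E (ENNReal.ofReal p) μ) :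
    ‖f‖ ^ p = ∫ ω, ‖f ω‖ ^ p ∂μ := by
  rw [Lp.norm_def, toReal_eLpNorm (Lp.aestronglyMeasurable f),
    lpNorm_eq_integral_norm_rpow_toReal (by simpa using hp) ENNReal.ofReal_ne_top
      (Lp.aestronglyMeasurable f), ENNReal.toReal_ofReal hp.le,
    ← Real.rpow_mul (integral_nonneg fun ω => by positivity), inv_mul_cancel₀ hp.ne',
    Real.rpow_one]

lemma parallelogramDefect_ae_eq (f g : Lp E (ENNReal.ofReal p) μ) :
    (fun ω => parallelogramDefect p (f ω) (g ω)) =ᵐ[μ]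
      fun ω => ‖(f + g) ω‖ ^ p + ‖(f - g) ω‖ ^ p - 2 * (‖f ω‖ ^ p + ‖g ω‖ ^ p) := by
  filter_upwards [Lp.coeFn_add f g, Lp.coeFn_sub f g] with ω hadd hsub
  rw [hadd, hsub, parallelogramDefect, Pi.add_apply, Pi.sub_apply]

lemma integrable_parallelogramDefect (hp : 0 < p) (f g : Lp E (ENNReal.ofReal p) μ) :
    Integrable (fun ω => parallelogramDefect p (f ω) (g ω)) μ := by
  have hint := integrable_norm_rpow hp (μ := μ) (E := E)
  refine Integrable.congr ?_ (parallelogramDefect_ae_eq f g).symm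
  exact ((hint _).add (hint _)).sub (((hint _).add (hint _)).const_mul 2)

lemma integral_parallelogramDefect (hp : 0 < p) (f g : Lp E (ENNReal.ofReal p) μ) :
    ∫ ω, parallelogramDefect p (f ω) (g ω) ∂μ =
      ‖f + g‖ ^ p + ‖f - g‖ ^ p - 2 * (‖f‖ ^ p + ‖g‖ ^ p) := by
  have hint := integrable_norm_rpow hp (μ := μ) (E := E)
  have hsum (f g : Lp E (ENNReal.ofReal p) μ) : Integrable (fun ω => ‖f ω‖ ^ p + ‖g ω‖ ^ p) μ :=
    (hint f).add (hint g)
  rw [integral_congr_ae (parallelogramDefect_ae_eq f g),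
    integral_sub (hsum _ _) ((hsum f g).const_mul 2), integral_add (hint _) (hint _),
    integral_const_mul, integral_add (hint _) (hint _), norm_rpow_eq_integral hp,
    norm_rpow_eq_integral hp, norm_rpow_eq_integral hp f, norm_rpow_eq_integral hp g]

end MeasureTheory.Lp

/-- For 1 ≤ p < ∞, p ≠ 2, two functions f, g ∈ L^p(μ) have almost disjoint
supports (f·g = 0 a.e.) iff ‖f+g‖_p^p + ‖f-g‖_p^p = 2(‖f‖_p^p + ‖g‖_p^p). -/
theorem Lp_almost_disjoint_supports_iff_norm_identity
    {Ω : Type*} [MeasurableSpace Ω] (μ : Measure Ω)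
    (p : ℝ) (hp1 : 1 ≤ p) (hp2 : p ≠ 2)
    (f g : Lp ℂ (ENNReal.ofReal p) μ) :
    (∀ᵐ ω ∂μ, f ω * g ω = 0) ↔
      ‖f + g‖ ^ p + ‖f - g‖ ^ p = 2 * (‖f‖ ^ p + ‖g‖ ^ p) := by
  have hp0 : 0 < p := by linarith
  rw [← sub_eq_zero, ← Lp.integral_parallelogramDefect hp0 f g,
    integral_eq_zero_iff_of_mul_nonneg (sub_ne_zero.2 hp2)
      (Lp.integrable_parallelogramDefect hp0 f g)
      (ae_of_all _ fun ω => mul_parallelogramDefect_nonneg hp0 (f ω) (g ω))]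
  refine Filter.eventually_congr (ae_of_all _ fun ω => ?_)
  rw [Pi.zero_apply, parallelogramDefect_eq_zero_iff hp0 hp2, mul_eq_zero]
end

section
/- The automorphism group of H(ℂ), the Fréchet algebra of entire functions with the topology of uniform convergence on compact subsets, is not topologically reflexive: the continuous linear operator ψ defined by ψ(f) = f(0)·1 (the constant function with value f(0)) satisfies that ψ(f) lies in the closure of { χ(f) : χ a continuous algebra automorphism of H(ℂ) } for every entire function f, yet ψ is not an automorphism (it is not injective). -/
set_option synthInstance.maxHeartbeats 1000000

noncomputable def entireAlg : Subalgebra ℂ C(ℂ, ℂ) where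
  carrier := {f | Differentiable ℂ ⇑f}
  add_mem' := by
    intro f g hf hg
    simpa using hf.add hg
  mul_mem' := by
    intro f g hf hg
    simpa using hf.mul hg
  one_mem' := by
    show Differentiable ℂ ⇑(1 : C(ℂ, ℂ))
    rw [ContinuousMap.coe_one]
    exact differentiable_const (1 : ℂ)
  zero_mem' := by
    show Differentiable ℂ ⇑(0 : C(ℂ, ℂ))
    rw [ContinuousMap.coe_zero]
    exact differentiable_const (0 : ℂ)
  algebraMap_mem' := fun c => by
    show Differentiable ℂ ⇑(algebraMap ℂ C(ℂ, ℂ) c)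
    have : ⇑(algebraMap ℂ C(ℂ, ℂ) c) = fun _ : ℂ => c := rfl
    rw [this]
    exact differentiable_const c

/-!
The operator `f ↦ f 0` is the dilation `f ↦ f (0 * ·)`. The dilations `f ↦ f (a * ·)` depend
continuously on `a` in the compact-open topology and are automorphisms for `a ≠ 0`, so letting
`a → 0` puts `f 0` in the closure of the orbit of `f`; but `f ↦ f 0` kills `z ↦ z`.
-/

namespace entireAlg

noncomputable def dilation (a : ℂ) : entireAlg →ₐ[ℂ] entireAlg :=
  ((ContinuousMap.compRightAlgHom ℂ ℂ (ContinuousMap.mulLeft a)).comp entireAlg.val).codRestrict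
    entireAlg fun f => (f.2 : Differentiable ℂ ⇑(f : C(ℂ, ℂ))).comp (differentiable_id.const_mul a)

@[simp]
lemma dilation_apply (a : ℂ) (f : entireAlg) (z : ℂ) :
    (dilation a f : C(ℂ, ℂ)) z = (f : C(ℂ, ℂ)) (a * z) :=
  rfl

lemma continuous_dilation (a : ℂ) : Continuous (dilation a) :=
  ((ContinuousMap.continuous_precomp _).comp continuous_subtype_val).subtype_mk _

lemma continuous_dilation_apply (f : entireAlg) : Continuous fun a : ℂ => dilation a f :=
  let mul : C(ℂ × ℂ, ℂ) := ⟨fun p => p.1 * p.2, continuous_mul⟩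
  ((ContinuousMap.continuous_postcomp (f : C(ℂ, ℂ))).comp mul.curry.continuous).subtype_mk _

lemma dilation_comp (a b : ℂ) : (dilation a).comp (dilation b) = dilation (b * a) := by
  ext f z
  simp [mul_assoc]

lemma dilation_one : dilation 1 = AlgHom.id ℂ entireAlg := by
  ext f z
  simp

noncomputable def dilationEquiv (u : ℂˣ) : entireAlg ≃ₐ[ℂ] entireAlg :=
  AlgEquiv.ofAlgHom (dilation u) (dilation ↑u⁻¹)
    (by rw [dilation_comp, Units.inv_mul, dilation_one])
    (by rw [dilation_comp, Units.mul_inv, dilation_one])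

lemma dilation_mem_closure_range_dilationEquiv (a : ℂ) (f : entireAlg) :
    dilation a f ∈ closure (Set.range fun u : ℂˣ => dilationEquiv u f) := by
  have hdense : Dense (Set.range ((↑) : ℂˣ → ℂ)) := by
    convert dense_compl_singleton (0 : ℂ)
    exact Set.ext fun _ => isUnit_iff_ne_zero
  refine closure_mono ?_ ((continuous_dilation_apply f).range_subset_closure_image_dense hdense
    ⟨a, rfl⟩)
  rintro _ ⟨_, ⟨u, rfl⟩, rfl⟩
  exact ⟨u, rfl⟩

lemma dilation_zero_not_injective : ¬ Function.Injective (dilation 0) := by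
  let z : entireAlg := ⟨ContinuousMap.id ℂ, differentiable_id⟩
  have hz : z ≠ 0 := fun h => one_ne_zero (congrArg (fun g : entireAlg => (g : C(ℂ, ℂ)) 1) h)
  refine fun hinj => hz (hinj ?_)
  ext w
  simp [z]

end entireAlg

open entireAlg in
/-- The automorphism group of H(ℂ) is not topologically reflexive: the
operator ψ(f) = f(0)·1 is continuous and linear, each ψ f lies in the closure of the
orbit of f under the continuous algebra automorphisms, yet ψ is not injective, hence
not an automorphism. -/
theorem entire_automorphism_group_not_topologically_reflexive :
    ∃ ψ : entireAlg →L[ℂ] entireAlg,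
      (∀ (f : entireAlg) (z : ℂ), (ψ f : C(ℂ, ℂ)) z = (f : C(ℂ, ℂ)) 0) ∧
      (∀ f : entireAlg,
        ψ f ∈ closure {g : entireAlg | ∃ χ : entireAlg ≃ₐ[ℂ] entireAlg,
          Continuous χ ∧ Continuous χ.symm ∧ g = χ f}) ∧
      ¬ Function.Injective ψ := by
  refine ⟨{ (dilation 0).toLinearMap with cont := continuous_dilation 0 },
    fun f z => congrArg (f : C(ℂ, ℂ)) (zero_mul z), fun f => ?_,
    dilation_zero_not_injective⟩
  refine closure_mono ?_ (dilation_mem_closure_range_dilationEquiv 0 f)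
  rintro _ ⟨u, rfl⟩
  exact ⟨dilationEquiv u, continuous_dilation _, continuous_dilation _, rfl⟩
end

section
/- The automorphism group of H(ℂ), the Fréchet algebra of entire functions with the topology of uniform convergence on compact subsets, is algebraically reflexive: every continuous linear operator ψ on H(ℂ) such that for each entire function f there exists a continuous algebra automorphism χ of H(ℂ) with ψ(f) = χ(f) is itself a continuous algebra automorphism of H(ℂ). -/
set_option synthInstance.maxHeartbeats 1000000
set_option maxHeartbeats 1000000
set_option maxRecDepth 8000

open Complex Filter Polynomial Set Bornology Topology

namespace EntireReflex

lemma poly_growth : ∀ (m : ℕ) (h : ℂ → ℂ), Differentiable ℂ h →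
    ∀ (C R : ℝ), (∀ z : ℂ, R ≤ ‖z‖ → ‖h z‖ ≤ C * ‖z‖ ^ m) →
    ∃ q : Polynomial ℂ, ∀ z, h z = q.eval z := by
  intro m
  induction m with
  | zero =>
    intro h hd C R hb
    have hbd : IsBounded (Set.range h) := by
      obtain ⟨M, hM⟩ := (isCompact_closedBall (0:ℂ) |R|).exists_bound_of_continuousOn
        hd.continuous.continuousOn
      rw [isBounded_iff_forall_norm_le]
      refine ⟨max C M, ?_⟩
      rintro x ⟨z, rfl⟩
      rcases le_or_gt R (‖z‖) with hz | hz
      · have := hb z hz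
        simp only [pow_zero, mul_one] at this
        exact le_trans (by simpa using this) (le_max_left _ _)
      · have hzb : z ∈ Metric.closedBall (0:ℂ) |R| := by
          simp only [Metric.mem_closedBall, dist_zero_right]
          exact le_trans hz.le (le_abs_self R)
        exact le_trans (hM z hzb) (le_max_right _ _)
    obtain ⟨c, hc⟩ := hd.exists_const_forall_eq_of_bounded hbd
    exact ⟨Polynomial.C c, by simp [hc]⟩
  | succ m ih =>
    intro h hd C R hb
    have hA : AnalyticAt ℂ h 0 := hd.analyticAt 0
    obtain ⟨p, hp⟩ := hA
    have hd1 : Differentiable ℂ (dslope h 0) := by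
      intro z
      rcases eq_or_ne z 0 with rfl | hz
      · exact hp.has_fpower_series_dslope_fslope.differentiableAt
      · exact (differentiableAt_dslope_of_ne hz).mpr (hd z)
    have hb1 : ∀ z : ℂ, max R 1 ≤ ‖z‖ →
        ‖dslope h 0 z‖ ≤ (|C| + ‖h 0‖) * ‖z‖ ^ m := by
      intro z hz
      have hz1 : (1:ℝ) ≤ ‖z‖ := le_trans (le_max_right _ _) hz
      have hz0 : z ≠ 0 := by
        intro h0; rw [h0] at hz1; simp at hz1; linarith
      have hzR : R ≤ ‖z‖ := le_trans (le_max_left _ _) hz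
      rw [dslope_of_ne _ hz0]
      have : slope h 0 z = (h z - h 0) / z := by
        rw [slope_def_field]; simp [div_eq_inv_mul]
      rw [this]
      have habs : ‖(h z - h 0)/z‖ = (‖h z - h 0‖)/‖z‖ := by
        simp [norm_div]
      rw [habs, div_le_iff₀ (by positivity)]
      calc ‖h z - h 0‖ ≤ ‖h z‖ + ‖h 0‖ := by
            simpa using norm_sub_le (h z) (h 0)
        _ ≤ C * ‖z‖ ^ (m+1) + ‖h 0‖ * ‖z‖ ^ (m+1) := by
            gcongr
            · exact hb z hzR
            · exact le_mul_of_one_le_right (norm_nonneg _) (one_le_pow₀ hz1)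
        _ ≤ (|C| + ‖h 0‖) * ‖z‖ ^ (m+1) := by
            have : C ≤ |C| := le_abs_self C
            nlinarith [norm_nonneg (h 0), pow_nonneg (norm_nonneg z) (m+1)]
        _ = (|C| + ‖h 0‖) * ‖z‖ ^ m * ‖z‖ := by ring
    obtain ⟨q1, hq1⟩ := ih (dslope h 0) hd1 _ _ hb1
    refine ⟨Polynomial.C (h 0) + Polynomial.X * q1, fun z => ?_⟩
    have hsub := sub_smul_dslope h 0 z
    simp only [sub_zero, smul_eq_mul] at hsub
    rw [eval_add, eval_C, eval_mul, eval_X, ← hq1]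
    linear_combination -hsub


lemma exp_poly_eq (A B u v : ℂ) (hA : A ≠ 0) (hu : u ≠ 0) (hv : v ≠ 0) (p : Polynomial ℂ)
    (h : ∀ z, A * Complex.exp (u*z) - B * Complex.exp (v*z) = p.eval z) :
    (∀ z, A * Complex.exp (u*z) = B * Complex.exp (v*z)) ∧ (∀ z, p.eval z = 0) := by
  have key : ∀ (k : ℕ) (z : ℂ), u^k * A * Complex.exp (u*z) - v^k * B * Complex.exp (v*z)
      = ((derivative^[k]) p).eval z := by
    intro k
    induction k with
    | zero => intro z; simpa using h z
    | succ k ihk =>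
      intro z
      have h1 : HasDerivAt (fun w : ℂ => Complex.exp (u*w)) (Complex.exp (u*z) * u) z := by
        simpa using ((hasDerivAt_id z).const_mul u).cexp
      have h2 : HasDerivAt (fun w : ℂ => Complex.exp (v*w)) (Complex.exp (v*z) * v) z := by
        simpa using ((hasDerivAt_id z).const_mul v).cexp
      have hF : HasDerivAt (fun w => u^k * A * Complex.exp (u*w) - v^k * B * Complex.exp (v*w))
          (u^(k+1) * A * Complex.exp (u*z) - v^(k+1) * B * Complex.exp (v*z)) z := by
        have := (h1.const_mul (u^k * A)).sub (h2.const_mul (v^k * B))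
        exact this.congr_deriv (by ring)
      have hG' : HasDerivAt (fun w => ((derivative^[k]) p).eval w)
          (((derivative^[k+1]) p).eval z) z := by
        have := Polynomial.hasDerivAt ((derivative^[k]) p) z
        rw [Function.iterate_succ_apply']
        exact this
      have hF' : HasDerivAt (fun w => ((derivative^[k]) p).eval w)
          (u^(k+1) * A * Complex.exp (u*z) - v^(k+1) * B * Complex.exp (v*z)) z := by
        refine hF.congr_of_eventuallyEq ?_
        filter_upwards with w using (ihk w).symm
      exact hF'.unique hG'
  set N := p.natDegree + 1 with hN
  have hz1 : (derivative^[N]) p = 0 := Polynomial.iterate_derivative_eq_zero (Nat.lt_succ_self _)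
  have hz2 : (derivative^[N+1]) p = 0 := Polynomial.iterate_derivative_eq_zero (by omega)
  have E1 : ∀ z, u^N * A * Complex.exp (u*z) = v^N * B * Complex.exp (v*z) := by
    intro z; have := key N z; rw [hz1] at this; simpa [sub_eq_zero] using this
  have E2 : ∀ z, u^(N+1) * A * Complex.exp (u*z) = v^(N+1) * B * Complex.exp (v*z) := by
    intro z; have := key (N+1) z; rw [hz2] at this; simpa [sub_eq_zero] using this
  have hne : u^N * A * Complex.exp (u*0) ≠ 0 := by
    apply mul_ne_zero (mul_ne_zero (pow_ne_zero _ hu) hA) (Complex.exp_ne_zero _)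
  have huv : u = v := by
    have h1 := E1 0
    have h2 := E2 0
    have : (u - v) * (u^N * A * Complex.exp (u*0)) = 0 := by
      have : u * (u^N * A * Complex.exp (u*0)) = v * (v^N * B * Complex.exp (v*0)) := by
        linear_combination h2
      rw [← h1] at this
      linear_combination this
    rcases mul_eq_zero.mp this with h | h
    · exact sub_eq_zero.mp h
    · exact absurd h hne
  have hAB : A = B := by
    have h1 := E1 0
    rw [huv] at h1
    have := mul_right_cancel₀ (Complex.exp_ne_zero (v*0)) h1
    exact mul_left_cancel₀ (pow_ne_zero _ hv) this
  constructor
  · intro z; rw [huv, hAB]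
  · intro z; rw [← h z, huv, hAB]; ring


lemma bij_affine (φ θ : ℂ → ℂ) (hφd : Differentiable ℂ φ) (hθd : Differentiable ℂ θ)
    (hθφ : ∀ z, θ (φ z) = z) (hφθ : ∀ z, φ (θ z) = z) :
    ∃ a b : ℂ, a ≠ 0 ∧ ∀ z, φ z = a * z + b := by
  have hinj : Function.Injective φ := Function.LeftInverse.injective hθφ
  set z₀ : ℂ := θ 0 with hz₀def
  have hz₀ : φ z₀ = 0 := hφθ 0
  -- properness
  obtain ⟨R₀, hR₀⟩ := ((isCompact_closedBall (0:ℂ) 1).image hθd.continuous).isBounded.subset_closedBall 0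
  have hprop : ∀ z : ℂ, ‖φ z‖ ≤ 1 → ‖z‖ ≤ R₀ := by
    intro z hz
    have : z ∈ θ '' Metric.closedBall 0 1 := by
      refine ⟨φ z, ?_, hθφ z⟩
      simpa [Metric.mem_closedBall, Complex.dist_eq] using hz
    have := hR₀ this
    simpa [Metric.mem_closedBall, Complex.dist_eq] using this
  -- order of zero at z₀
  have hA : AnalyticAt ℂ φ z₀ := hφd.analyticAt z₀
  have hord : analyticOrderAt φ z₀ ≠ ⊤ := by
    intro h
    rw [analyticOrderAt_eq_top] at h
    have h2 : ∀ᶠ w in 𝓝[≠] z₀, φ w = 0 := (h.filter_mono nhdsWithin_le_nhds : _)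
    have h3 : ∀ᶠ w in 𝓝[≠] z₀, φ w = 0 ∧ w ∈ ({z₀}ᶜ : Set ℂ) := h2.and eventually_mem_nhdsWithin
    obtain ⟨w, hw0, hwne⟩ := h3.exists
    exact hwne (hinj (by rw [hw0, hz₀]))
  obtain ⟨m, hm⟩ : ∃ m : ℕ, analyticOrderAt φ z₀ = m := ⟨(analyticOrderAt φ z₀).toNat, (ENat.coe_toNat hord).symm⟩
  rw [hA.analyticOrderAt_eq_natCast] at hm
  obtain ⟨g, hg, hgz, hev⟩ := hm
  have hm1 : 1 ≤ m := by
    rcases Nat.eq_zero_or_pos m with h0 | h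
    · exfalso
      have := hev.self_of_nhds
      rw [h0] at this
      simp only [pow_zero, one_smul] at this
      exact hgz (by rw [← this, hz₀])
    · exact h
  set G : ℂ → ℂ := fun z => if z = z₀ then g z₀ else φ z / (z - z₀)^m with hGdef
  have hGev : G =ᶠ[𝓝 z₀] g := by
    filter_upwards [hev] with z hz
    by_cases h : z = z₀
    · simp [hGdef, h]
    · simp only [hGdef, if_neg h]
      rw [hz, smul_eq_mul]
      field_simp [sub_ne_zero.mpr h]
  have hGd : Differentiable ℂ G := by
    intro z
    rcases eq_or_ne z z₀ with rfl | hz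
    · exact hg.differentiableAt.congr_of_eventuallyEq hGev
    · have hev2 : G =ᶠ[𝓝 z] fun w => φ w / (w - z₀)^m := by
        filter_upwards [IsOpen.mem_nhds isOpen_ne hz] with w hw
        simp only [hGdef, if_neg hw]
      apply DifferentiableAt.congr_of_eventuallyEq ?_ hev2
      exact (hφd z).div (((differentiable_id.sub_const z₀).pow m) z)
        (pow_ne_zero _ (sub_ne_zero.mpr hz))
  have hGne : ∀ z, G z ≠ 0 := by
    intro z
    rcases eq_or_ne z z₀ with rfl | hz
    · simpa [hGdef] using hgz
    · simp only [hGdef, if_neg hz]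
      apply div_ne_zero ?_ (pow_ne_zero _ (sub_ne_zero.mpr hz))
      intro h0
      exact hz (hinj (by rw [h0, hz₀]))
  have hfac : ∀ z, φ z = (z - z₀)^m * G z := by
    intro z
    rcases eq_or_ne z z₀ with rfl | hz
    · rw [hz₀, sub_self, zero_pow (by omega), zero_mul]
    · simp only [hGdef, if_neg hz]
      field_simp [pow_ne_zero _ (sub_ne_zero.mpr hz)]
  have hH : Differentiable ℂ (fun z => (G z)⁻¹) := fun z => ((hGd z).inv (hGne z))
  set R : ℝ := max (R₀ + 1) (2 * ‖z₀‖ + 1) with hRdef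
  have hbound : ∀ z : ℂ, R ≤ ‖z‖ → ‖(G z)⁻¹‖ ≤ 2^m * ‖z‖ ^ m := by
    intro z hz
    have hz₀lt : ‖z₀‖ < ‖z‖ := by
      have : 2 * ‖z₀‖ + 1 ≤ ‖z‖ := le_trans (le_max_right _ _) hz
      nlinarith [norm_nonneg z₀]
    have hzz₀ : z ≠ z₀ := by
      intro h; rw [h] at hz₀lt; exact lt_irrefl _ hz₀lt
    have hφ1 : 1 ≤ ‖φ z‖ := by
      by_contra h
      push_neg at h
      have := hprop z h.le
      have : R₀ + 1 ≤ R₀ := le_trans (le_trans (le_max_left _ _) hz) this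
      linarith
    have hφne : φ z ≠ 0 := by
      intro h; rw [h] at hφ1; simp at hφ1; linarith
    have hGinv : (G z)⁻¹ = (z - z₀)^m / φ z := by
      simp only [hGdef, if_neg hzz₀]
      rw [inv_div]
    rw [hGinv, norm_div, norm_pow]
    have h1 : ‖z - z₀‖ ≤ 2 * ‖z‖ := by
      calc ‖z - z₀‖ ≤ ‖z‖ + ‖z₀‖ := norm_sub_le z z₀
        _ ≤ 2 * ‖z‖ := by linarith
    calc ‖z - z₀‖ ^ m / ‖φ z‖ ≤ ‖z - z₀‖ ^ m / 1 := by
          apply div_le_div_of_nonneg_left ?_ ?_ hφ1 <;> positivity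
      _ = ‖z - z₀‖ ^ m := by rw [div_one]
      _ ≤ (2 * ‖z‖) ^ m := by
          apply pow_le_pow_left₀ (norm_nonneg _) h1
      _ = 2^m * ‖z‖ ^ m := by rw [mul_pow]
  obtain ⟨q, hq⟩ := poly_growth m _ hH _ _ hbound
  have hqne : ∀ w : ℂ, q.eval w ≠ 0 := by
    intro w
    rw [← hq w]
    exact inv_ne_zero (hGne w)
  obtain ⟨c, rfl⟩ : ∃ c, q = Polynomial.C c := by
    rcases le_or_gt q.degree 0 with h | h
    · exact ⟨q.coeff 0, Polynomial.eq_C_of_degree_le_zero h⟩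
    · exfalso
      obtain ⟨w, hw⟩ := Complex.exists_root h
      exact hqne w hw
  have hc : c ≠ 0 := by simpa using hqne 0
  have hGc : ∀ z, G z = c⁻¹ := by
    intro z
    have := hq z
    rw [Polynomial.eval_C] at this
    rw [← inv_inv (G z), this]
  have hφform : ∀ z, φ z = c⁻¹ * (z - z₀)^m := by
    intro z; rw [hfac z, hGc z]; ring
  have hm2 : m = 1 := by
    by_contra hne
    have hm2' : 2 ≤ m := by omega
    set ζ : ℂ := Complex.exp (2 * Real.pi * Complex.I / m) with hζdef
    have hζm : ζ ^ m = 1 := by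
      have hm0 : (m:ℂ) ≠ 0 := Nat.cast_ne_zero.mpr (by omega)
      rw [hζdef, ← Complex.exp_nat_mul]
      rw [show (m : ℂ) * (2 * Real.pi * Complex.I / m) = 2 * Real.pi * Complex.I by
        rw [← mul_div_assoc, mul_div_cancel_left₀ _ hm0]]
      exact Complex.exp_two_pi_mul_I
    have hζ1 : ζ ≠ 1 := by
      intro h
      have hm0 : (m:ℂ) ≠ 0 := Nat.cast_ne_zero.mpr (by omega)
      rw [hζdef, Complex.exp_eq_one_iff] at h
      obtain ⟨n, hn⟩ := h
      have h3 : 2 * (Real.pi:ℂ) * Complex.I = (n:ℂ) * (2*Real.pi*Complex.I) * m := by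
        have := congrArg (fun w => w * (m:ℂ)) hn
        simpa [div_mul_cancel₀ _ hm0] using this
      have hpi : (2 * (Real.pi:ℂ) * Complex.I) ≠ 0 := by
        simp [Real.pi_ne_zero, Complex.I_ne_zero, Complex.ofReal_ne_zero]
      have h4 : (n : ℂ) * m = 1 := by
        apply mul_left_cancel₀ hpi
        rw [mul_one]
        linear_combination -h3
      have h5 : (n * (m:ℤ) : ℤ) = 1 := by exact_mod_cast h4
      have h6 : (m:ℤ) ∣ 1 := ⟨n, by rw [← h5]; ring⟩
      have h7 : (m:ℤ) ≤ 1 := Int.le_of_dvd one_pos h6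
      have h8 : m ≤ 1 := by exact_mod_cast h7
      omega
    have heq : φ (z₀ + ζ) = φ (z₀ + 1) := by
      rw [hφform, hφform]
      simp [hζm]
    have := hinj heq
    exact hζ1 (add_left_cancel this)
  refine ⟨c⁻¹, -(c⁻¹ * z₀), inv_ne_zero hc, fun z => ?_⟩
  rw [hφform z, hm2]
  ring


noncomputable def el (f : ℂ → ℂ) (hf : Differentiable ℂ f) : entireAlg := ⟨⟨f, hf.continuous⟩, hf⟩

noncomputable def idel : entireAlg := el id differentiable_id

noncomputable def ev (z : ℂ) : entireAlg →ₐ[ℂ] ℂ where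
  toFun f := (f : C(ℂ, ℂ)) z
  map_one' := rfl
  map_mul' _ _ := rfl
  map_zero' := rfl
  map_add' _ _ := rfl
  commutes' _ := rfl

@[simp] lemma ev_el (f : ℂ → ℂ) (hf : Differentiable ℂ f) (z : ℂ) : ev z (el f hf) = f z := rfl
@[simp] lemma ev_idel (z : ℂ) : ev z idel = z := rfl

lemma ev_diff (f : entireAlg) : Differentiable ℂ (fun z => ev z f) := f.2

lemma ev_cont (f : entireAlg) : Continuous (fun z => ev z f) := (f : C(ℂ, ℂ)).continuous

lemma el_eta (f : entireAlg) : el (fun z => ev z f) (ev_diff f) = f := by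
  apply Subtype.ext
  apply ContinuousMap.ext
  intro z
  rfl

lemma ev_eq (f g : entireAlg) (h : ∀ z, ev z f = ev z g) : f = g := by
  apply Subtype.ext; apply ContinuousMap.ext; intro z; exact h z

lemma ev_aeval (z : ℂ) (e : entireAlg) (q : Polynomial ℂ) :
    ev z (Polynomial.aeval e q) = q.eval (ev z e) := by
  rw [← Polynomial.aeval_algHom_apply]
  simp [Polynomial.aeval_def, Polynomial.eval₂_eq_eval_map]

lemma tendsto_el_iff {F : ℕ → entireAlg} {f : entireAlg} :
    Tendsto F atTop (𝓝 f) ↔ ∀ K : Set ℂ, IsCompact K →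
      TendstoUniformlyOn (fun n z => ev z (F n)) (fun z => ev z f) atTop K := by
  rw [tendsto_subtype_rng]
  exact ContinuousMap.tendsto_iff_forall_isCompact_tendstoUniformlyOn

lemma key_approx (q : ℕ → Polynomial ℂ) (F : ℂ → ℂ)
    (hq : ∀ K : Set ℂ, IsCompact K → TendstoUniformlyOn (fun n z => (q n).eval z) F atTop K)
    (e G : entireAlg) (hG : ∀ z, ev z G = F (ev z e)) :
    Tendsto (fun n => Polynomial.aeval e (q n)) atTop (𝓝 G) := by
  rw [tendsto_el_iff]
  intro K hK
  have hK2 : IsCompact ((fun z => ev z e) '' K) := hK.image (ev_cont e)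
  have h2 := (hq _ hK2).comp (fun z => ev z e)
  have h3 := h2.mono (subset_preimage_image _ _)
  apply h3.congr_right ?_ |>.congr ?_
  · intro z _; exact (hG z).symm
  · filter_upwards with n z _
    exact (ev_aeval z e (q n)).symm

lemma exists_taylor (f : entireAlg) : ∃ q : ℕ → Polynomial ℂ,
    ∀ K : Set ℂ, IsCompact K →
      TendstoUniformlyOn (fun n z => (q n).eval z) (fun z => ev z f) atTop K := by
  have hd : Differentiable ℂ (fun z => ev z f) := f.2
  have hp : HasFPowerSeriesOnBall (fun z => ev z f)
      (cauchyPowerSeries (fun z => ev z f) 0 1) 0 ⊤ := hd.hasFPowerSeriesOnBall 0 (R := 1) (by norm_num)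
  set p := cauchyPowerSeries (fun z => ev z f) 0 1 with hpdef
  refine ⟨fun n => ∑ k ∈ Finset.range n, Polynomial.C (p.coeff k) * Polynomial.X ^ k, ?_⟩
  intro K hK
  obtain ⟨r, hr⟩ := hK.isBounded.subset_ball 0
  set r' : NNReal := ⟨max r 0, le_max_right _ _⟩ with hr'def
  have hlt : (r' : ENNReal) < ⊤ := ENNReal.coe_lt_top
  have hTU := hp.tendstoUniformlyOn hlt
  have hTU2 : TendstoUniformlyOn (fun n y => p.partialSum n y) (fun z => ev z f) atTop
      (Metric.ball (0:ℂ) r') := by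
    apply hTU.congr_right
    intro z _; simp
  have hsub : K ⊆ Metric.ball (0:ℂ) r' := by
    refine hr.trans (Metric.ball_subset_ball ?_)
    exact le_max_left r 0
  apply (hTU2.mono hsub).congr
  filter_upwards with n z _
  show (∑ k ∈ Finset.range n, (p k) fun _ => z) = _
  simp only [Polynomial.eval_finset_sum]
  apply Finset.sum_congr rfl
  intro k _
  rw [FormalMultilinearSeries.apply_eq_pow_smul_coeff, smul_eq_mul,
    Polynomial.eval_mul, Polynomial.eval_C, Polynomial.eval_pow, Polynomial.eval_X, mul_comm]


lemma comp_rep (χ : entireAlg ≃ₐ[ℂ] entireAlg) (hχ : Continuous χ) (f : entireAlg) (z : ℂ) :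
    ev z (χ f) = ev (ev z (χ idel)) f := by
  obtain ⟨q, hq⟩ := exists_taylor f
  have h1 : Tendsto (fun n => Polynomial.aeval idel (q n)) atTop (𝓝 f) :=
    key_approx q _ hq idel f (fun z => rfl)
  have h2 : Tendsto (fun n => χ (Polynomial.aeval idel (q n))) atTop (𝓝 (χ f)) :=
    (hχ.tendsto f).comp h1
  have hcomm : ∀ n, χ (Polynomial.aeval idel (q n)) = Polynomial.aeval (χ idel) (q n) := by
    intro n
    have := Polynomial.aeval_algHom_apply χ.toAlgHom idel (q n)
    simpa using this.symm
  have hGd : Differentiable ℂ (fun w => ev (ev w (χ idel)) f) :=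
    (ev_diff f).comp (ev_diff (χ idel))
  have h3 : Tendsto (fun n => Polynomial.aeval (χ idel) (q n)) atTop
      (𝓝 (el (fun w => ev (ev w (χ idel)) f) hGd)) :=
    key_approx q _ hq (χ idel) _ (fun w => rfl)
  have h2' : Tendsto (fun n => Polynomial.aeval (χ idel) (q n)) atTop (𝓝 (χ f)) := by
    rw [show (fun n => Polynomial.aeval (χ idel) (q n)) = (fun n => χ (Polynomial.aeval idel (q n)))
      from funext fun n => (hcomm n).symm]
    exact h2
  have := tendsto_nhds_unique h2' h3
  rw [this]; rfl


lemma phi_affine (χ : entireAlg ≃ₐ[ℂ] entireAlg) (hχ : Continuous χ) (hχs : Continuous χ.symm) :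
    ∃ a b : ℂ, a ≠ 0 ∧ ∀ z, ev z (χ idel) = a * z + b := by
  have hθφ : ∀ z, ev (ev z (χ idel)) (χ.symm idel) = z := by
    intro z
    have h := comp_rep χ hχ (χ.symm idel) z
    rw [AlgEquiv.apply_symm_apply] at h
    simpa using h.symm
  have hφθ : ∀ z, ev (ev z (χ.symm idel)) (χ idel) = z := by
    intro z
    have h := comp_rep χ.symm hχs (χ idel) z
    rw [AlgEquiv.symm_apply_apply] at h
    simpa using h.symm
  exact bij_affine _ _ (ev_diff _) (ev_diff _) hθφ hφθ

end EntireReflex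

open EntireReflex Complex Filter Polynomial

/-- The automorphism group of H(ℂ) is algebraically reflexive: any
continuous linear operator ψ agreeing at each entire function with some continuous
algebra automorphism is itself a continuous algebra automorphism. -/
theorem entire_automorphism_group_algebraically_reflexive
    (ψ : entireAlg →L[ℂ] entireAlg)
    (hψ : ∀ f : entireAlg, ∃ χ : entireAlg ≃ₐ[ℂ] entireAlg,
      Continuous χ ∧ Continuous χ.symm ∧ ψ f = χ f) :
    ∃ χ : entireAlg ≃ₐ[ℂ] entireAlg, Continuous χ ∧ Continuous χ.symm ∧
      ∀ f : entireAlg, ψ f = χ f := by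
  classical
  obtain ⟨χ, hχc, hχs, hχid⟩ := hψ idel
  refine ⟨χ, hχc, hχs, ?_⟩
  have wit : ∀ f : entireAlg, ∃ a b : ℂ, a ≠ 0 ∧ ∀ z, ev z (ψ f) = ev (a*z+b) f := by
    intro f
    obtain ⟨χ', h1, h2, h3⟩ := hψ f
    obtain ⟨a, b, ha, hab⟩ := phi_affine χ' h1 h2
    exact ⟨a, b, ha, fun z => by rw [h3, comp_rep χ' h1 f z, hab z]⟩
  obtain ⟨α, β, hα, hφ⟩ := phi_affine χ hχc hχs
  have hψid : ∀ z, ev z (ψ idel) = α * z + β := fun z => by rw [hχid]; exact hφ z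
  have hexpd : ∀ l : ℂ, Differentiable ℂ (fun z : ℂ => Complex.exp (l*z)) :=
    fun l => (differentiable_id.const_mul l).cexp
  set expel : ℂ → entireAlg := fun l => el (fun z => Complex.exp (l*z)) (hexpd l) with hexpel
  -- Claim A : the image of exponentials
  have claimA : ∀ l : ℂ, l ≠ 0 → ∀ z, ev z (ψ (expel l)) = Complex.exp (l*(α*z+β)) := by
    intro l hl
    obtain ⟨a1, b1, ha1, h1⟩ := wit (expel l)
    obtain ⟨a2, b2, ha2, h2⟩ := wit (expel l + idel)
    have hS : ∀ z : ℂ, ev z (ψ (expel l)) = Complex.exp (l*(a1*z+b1)) := by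
      intro z
      rw [h1 z]
      simp [hexpel]
    have eqA : ∀ z : ℂ, Complex.exp (l*(a1*z+b1)) + (α*z+β)
        = Complex.exp (l*(a2*z+b2)) + (a2*z+b2) := by
      intro z
      have hL := h2 z
      simp only [map_add] at hL
      rw [hψid z, hS z] at hL
      simpa [hexpel] using hL
    set p : Polynomial ℂ := Polynomial.C (β - b2) + Polynomial.C (α - a2) * Polynomial.X with hp
    have hmain : ∀ z : ℂ, Complex.exp (l*b2) * Complex.exp ((l*a2)*z)
        - Complex.exp (l*b1) * Complex.exp ((l*a1)*z) = p.eval z := by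
      intro z
      have h := eqA z
      have e1 : Complex.exp (l*(a1*z+b1)) = Complex.exp (l*b1) * Complex.exp ((l*a1)*z) := by
        rw [← Complex.exp_add]; congr 1; ring
      have e2 : Complex.exp (l*(a2*z+b2)) = Complex.exp (l*b2) * Complex.exp ((l*a2)*z) := by
        rw [← Complex.exp_add]; congr 1; ring
      rw [e1, e2] at h
      simp only [hp, Polynomial.eval_add, Polynomial.eval_mul, Polynomial.eval_C,
        Polynomial.eval_X]
      linear_combination -h
    obtain ⟨hE, hP⟩ := exp_poly_eq _ _ _ _ (Complex.exp_ne_zero _)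
      (mul_ne_zero hl ha2) (mul_ne_zero hl ha1) p hmain
    have hb2 : b2 = β := by
      have h0 := hP 0
      simp only [hp, Polynomial.eval_add, Polynomial.eval_mul, Polynomial.eval_C,
        Polynomial.eval_X, mul_zero, add_zero] at h0
      have := sub_eq_zero.mp h0
      exact this.symm
    have ha2' : a2 = α := by
      have h1' := hP 1
      simp only [hp, Polynomial.eval_add, Polynomial.eval_mul, Polynomial.eval_C,
        Polynomial.eval_X, mul_one] at h1'
      rw [hb2] at h1'
      have : α - a2 = 0 := by linear_combination h1'
      exact (sub_eq_zero.mp this).symm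
    intro z
    have h := eqA z
    rw [hb2, ha2'] at h
    rw [hS z]
    exact add_right_cancel h
  -- Claim B : the image of monomials
  have claimB : ∀ n : ℕ, ∀ z, ev z (ψ (idel^n)) = (α*z+β)^n := by
    intro n
    rcases Nat.eq_zero_or_pos n with rfl | hn
    · intro z
      obtain ⟨a0, b0, ha0, h0⟩ := wit (idel^0)
      rw [h0 z]
      simp
    · obtain ⟨a3, b3, ha3, h3⟩ := wit (idel^n)
      have hS : ∀ z, ev z (ψ (idel^n)) = (a3*z+b3)^n := by
        intro z; rw [h3 z, map_pow]; simp
      have helper : ∀ l : ℂ, l ≠ 0 → ∃ k : ℤ,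
          ∀ z, (a3*z+b3)^n = (α*z + β + ((k:ℂ)*(2*Real.pi*Complex.I))/l)^n := by
        intro l hl
        obtain ⟨a4, b4, ha4, h4⟩ := wit (expel l + idel^n)
        have eqB : ∀ z, Complex.exp (l*(α*z+β)) + (a3*z+b3)^n
            = Complex.exp (l*(a4*z+b4)) + (a4*z+b4)^n := by
          intro z
          have hL := h4 z
          simp only [map_add] at hL
          rw [claimA l hl z, hS z] at hL
          simp only [map_pow] at hL
          simpa [hexpel] using hL
        set p : Polynomial ℂ := (Polynomial.C a3 * Polynomial.X + Polynomial.C b3)^n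
            - (Polynomial.C a4 * Polynomial.X + Polynomial.C b4)^n with hp
        have hmain : ∀ z, Complex.exp (l*b4) * Complex.exp ((l*a4)*z)
            - Complex.exp (l*β) * Complex.exp ((l*α)*z) = p.eval z := by
          intro z
          have h := eqB z
          have e1 : Complex.exp (l*(α*z+β)) = Complex.exp (l*β) * Complex.exp ((l*α)*z) := by
            rw [← Complex.exp_add]; congr 1; ring
          have e2 : Complex.exp (l*(a4*z+b4)) = Complex.exp (l*b4) * Complex.exp ((l*a4)*z) := by
            rw [← Complex.exp_add]; congr 1; ring
          rw [e1, e2] at h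
          simp only [hp, Polynomial.eval_sub, Polynomial.eval_pow, Polynomial.eval_add,
            Polynomial.eval_mul, Polynomial.eval_C, Polynomial.eval_X]
          linear_combination -h
        obtain ⟨hE, hP⟩ := exp_poly_eq _ _ _ _ (Complex.exp_ne_zero _)
          (mul_ne_zero hl ha4) (mul_ne_zero hl hα) p hmain
        have hb4 : Complex.exp (l*b4) = Complex.exp (l*β) := by
          have := hE 0
          simpa using this
        have hExpz : ∀ z, Complex.exp ((l*a4)*z) = Complex.exp ((l*α)*z) := by
          intro z
          have := hE z
          rw [hb4] at this
          exact mul_left_cancel₀ (Complex.exp_ne_zero _) this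
        have ha4' : a4 = α := by
          by_contra hne
          have hc : l*(a4-α) ≠ 0 := mul_ne_zero hl (sub_ne_zero.mpr hne)
          set w : ℂ := (Real.pi * Complex.I)/(l*(a4-α)) with hw
          have h1 : Complex.exp ((l*a4)*w - (l*α)*w) = 1 := by
            rw [Complex.exp_sub, hExpz w, div_self (Complex.exp_ne_zero _)]
          have h2 : (l*a4)*w - (l*α)*w = Real.pi * Complex.I := by
            rw [hw]
            field_simp
          rw [h2, Complex.exp_pi_mul_I] at h1
          norm_num at h1
        have hone : Complex.exp (l*b4 - l*β) = 1 := by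
          rw [Complex.exp_sub, hb4, div_self (Complex.exp_ne_zero _)]
        rw [Complex.exp_eq_one_iff] at hone
        obtain ⟨k, hk⟩ := hone
        refine ⟨k, fun z => ?_⟩
        have hPz := hP z
        simp only [hp, Polynomial.eval_sub, Polynomial.eval_pow, Polynomial.eval_add,
          Polynomial.eval_mul, Polynomial.eval_C, Polynomial.eval_X] at hPz
        rw [sub_eq_zero] at hPz
        have hb4' : b4 = β + ((k:ℂ)*(2*Real.pi*Complex.I))/l := by
          have hl' := hl
          field_simp
          linear_combination hk
        rw [hPz, ha4', hb4']
        ring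
      obtain ⟨k1, hk1⟩ := helper 1 one_ne_zero
      obtain ⟨k2, hk2⟩ := helper (Real.pi : ℂ) (by exact_mod_cast Real.pi_ne_zero)
      have hπ : (Real.pi : ℂ) ≠ 0 := by exact_mod_cast Real.pi_ne_zero
      have hk1z : k1 = 0 := by
        set z0 : ℂ := (-β - (k1:ℂ)*(2*Real.pi*Complex.I))/α with hz0
        have hval : α*z0 + β = -((k1:ℂ)*(2*Real.pi*Complex.I)) := by
          rw [hz0]
          field_simp
          ring
        have hzero : (a3*z0+b3)^n = 0 := by
          rw [hk1 z0, div_one, hval, neg_add_cancel]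
          exact zero_pow (by omega)
        have h2 : (α*z0 + β + (k2:ℂ)*(2*Real.pi*Complex.I)/(Real.pi:ℂ))^n = 0 := by
          rw [← hk2 z0]; exact hzero
        have h3 : α*z0 + β + (k2:ℂ)*(2*Real.pi*Complex.I)/(Real.pi:ℂ) = 0 :=
          pow_eq_zero_iff (by omega) |>.mp h2
        rw [hval] at h3
        have hpiI : (2*(Real.pi:ℂ)*Complex.I) ≠ 0 := by
          simp [hπ, Complex.I_ne_zero]
        have h5 : (k2:ℂ)*(2*Real.pi*Complex.I) = (k1:ℂ)*(2*Real.pi*Complex.I)*(Real.pi:ℂ) := by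
          have h6 := congrArg (fun w : ℂ => w * (Real.pi:ℂ)) h3
          simp only [add_mul, zero_mul, div_mul_cancel₀ _ hπ, neg_mul] at h6
          linear_combination h6
        have h4 : (k1:ℂ)*(Real.pi:ℂ) = (k2:ℂ) := by
          apply mul_left_cancel₀ hpiI
          linear_combination -h5
        have h6 : (k1:ℝ) * Real.pi = (k2:ℝ) := by exact_mod_cast h4
        by_contra hk1ne
        have hirr := irrational_pi.intCast_mul hk1ne
        rw [h6] at hirr
        exact (Rat.not_irrational k2) (by exact_mod_cast hirr)
      intro z
      rw [hS z, hk1 z, hk1z]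
      norm_num
  -- monomials agree
  have hmon : ∀ n : ℕ, ψ (idel^n) = χ (idel^n) := by
    intro n
    apply ev_eq
    intro z
    have hR : ev z (χ (idel^n)) = (α*z+β)^n := by
      rw [comp_rep χ hχc (idel^n) z, map_pow]
      simp [hφ z]
    rw [claimB n z, hR]
  have hpoly : ∀ q : Polynomial ℂ, ψ (Polynomial.aeval idel q) = χ (Polynomial.aeval idel q) := by
    intro q
    rw [Polynomial.aeval_eq_sum_range]
    rw [map_sum, map_sum]
    apply Finset.sum_congr rfl
    intro i _
    rw [map_smul, map_smul, hmon i]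
  intro f
  obtain ⟨q, hq⟩ := exists_taylor f
  have h1 : Tendsto (fun n => Polynomial.aeval idel (q n)) atTop (𝓝 f) :=
    key_approx q _ hq idel f (fun z => rfl)
  have h2 : Tendsto (fun n => ψ (Polynomial.aeval idel (q n))) atTop (𝓝 (ψ f)) :=
    (ψ.continuous.tendsto f).comp h1
  have h3 : Tendsto (fun n => χ (Polynomial.aeval idel (q n))) atTop (𝓝 (χ f)) :=
    (hχc.tendsto f).comp h1
  have h4 : (fun n => ψ (Polynomial.aeval idel (q n)))
      = fun n => χ (Polynomial.aeval idel (q n)) := funext fun n => hpoly (q n)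
  rw [h4] at h2
  exact tendsto_nhds_unique h2 h3
end

section
/- Let Γ be an uncountable set, regarded as a discrete topological space, and let Γ ∪ {∞} be its one-point compactification. Then there exists a continuous linear operator T on the Banach algebra C(Γ ∪ {∞}, ℂ) of continuous complex-valued functions with the supremum norm such that T is not surjective, yet for every f there is an algebra automorphism χ of C(Γ ∪ {∞}, ℂ) (which is also a surjective linear isometry) with T f = χ(f). Consequently, both the isometry group and the automorphism group of C(Γ ∪ {∞}, ℂ) fail to be algebraically reflexive. -/
/-!
Since `Γ` is uncountable there is a bijection `k : Γ ≃ Γ ∪ {∞}`. Extending it by `∞ ↦ ∞` gives a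
continuous self-map `H` of `Γ ∪ {∞}` which identifies `k⁻¹ ∞` with `∞`, so `T f = f ∘ H` misses
every function separating these two points.

A continuous `f` differs from `f ∞` at only countably many points. Hence `f ∘ k` and `f` restricted
to `Γ` have fibres of equal cardinality: over `b ≠ f ∞` both are in bijection with `f⁻¹ {b}`, and
over `f ∞` both are co-countable, hence of size `#Γ`. Matching the fibres gives a permutation `π`
of `Γ` with `f ∘ H = f ∘ π̂`, where `π̂` is the homeomorphism of `Γ ∪ {∞}` extending `π`, and
composition with `π̂` is an isometric algebra automorphism.
-/

universe u

open OnePoint Filter Set Cardinal Topology Function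

theorem Cardinal.exists_perm_comp_eq_of_mk_fiber_eq {α β : Type*} {u v : α → β}
    (h : ∀ b, #(u ⁻¹' {b}) = #(v ⁻¹' {b})) : ∃ π : Equiv.Perm α, v ∘ π = u := by
  have e : ∀ b, u ⁻¹' {b} ≃ v ⁻¹' {b} := fun b => Classical.choice (Cardinal.eq.mp (h b))
  exact ⟨(Equiv.sigmaFiberEquiv u).symm.trans
    ((Equiv.sigmaCongrRight e).trans (Equiv.sigmaFiberEquiv v)),
    funext fun x => (e (u x) ⟨x, rfl⟩).2⟩

theorem Cardinal.mk_preimage_singleton_of_mk_ne_lt {α β : Type*} [Infinite α] {u : α → β}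
    {c : β} (h : #{x | u x ≠ c} < #α) : #(u ⁻¹' {c}) = #α := by
  rw [show u ⁻¹' {c} = {x | u x ≠ c}ᶜ by ext; simp]
  exact mk_compl_of_infinite _ h

theorem Cardinal.exists_perm_comp_eq_comp {X Y : Type u} {β : Type*} [Infinite X] {p q : X → Y}
    (hp : Injective p) (hq : Injective q) {w : Y → β} {c : β}
    (hp_range : {y | w y ≠ c} ⊆ range p) (hq_range : {y | w y ≠ c} ⊆ range q)
    (hlt : #{y | w y ≠ c} < #X) : ∃ π : Equiv.Perm X, (w ∘ q) ∘ π = w ∘ p := by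
  refine exists_perm_comp_eq_of_mk_fiber_eq fun b => ?_
  by_cases hb : b = c
  · subst hb
    rw [mk_preimage_singleton_of_mk_ne_lt, mk_preimage_singleton_of_mk_ne_lt]
    · rwa [← mk_preimage_of_injective_of_subset_range q _ hq hq_range] at hlt
    · rwa [← mk_preimage_of_injective_of_subset_range p _ hp hp_range] at hlt
  · have fiber_subset : w ⁻¹' {b} ⊆ {y | w y ≠ c} := fun y hy hyc => hb (hy ▸ hyc)
    rw [preimage_comp, preimage_comp,
      mk_preimage_of_injective_of_subset_range p _ hp (fiber_subset.trans hp_range),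
      mk_preimage_of_injective_of_subset_range q _ hq (fiber_subset.trans hq_range)]

theorem Cardinal.mk_onePoint_of_infinite {X : Type*} [Infinite X] : #(OnePoint X) = #X :=
  (mk_option (α := X)).trans mk_add_one_eq

theorem OnePoint.cofinite_le_nhds_infty {X : Type*} [TopologicalSpace X] [DiscreteTopology X] :
    cofinite ≤ 𝓝 (∞ : OnePoint X) := by
  intro s hs
  have hX : (↑) ⁻¹' s ∈ cofinite (α := X) :=
    (continuous_iff_from_discrete id).mp continuous_id hs
  refine (hX.image ((↑) : X → OnePoint X)).subset fun x hx => ?_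
  induction x using OnePoint.rec with
  | infty => exact absurd (mem_of_mem_nhds hs) hx
  | coe x => exact mem_image_of_mem _ hx

theorem OnePoint.countable_setOf_ne_infty {X Y : Type*} [TopologicalSpace X] [DiscreteTopology X]
    [TopologicalSpace Y] [T1Space Y] [FirstCountableTopology Y] (f : C(OnePoint X, Y)) :
    {x | f x ≠ f ∞}.Countable := by
  have hker := ((continuous_iff_from_discrete f).mp f.continuous).countable_compl_preimage_ker
  rw [ker_nhds] at hker
  refine (hker.image ((↑) : X → OnePoint X)).mono fun x hx => ?_
  induction x using OnePoint.rec with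
  | infty => exact absurd rfl hx
  | coe x => exact mem_image_of_mem _ hx

theorem ContinuousMap.not_surjective_compRight_of_not_injective {X Y 𝕜 : Type*}
    [TopologicalSpace X] [T35Space X] [TopologicalSpace Y] [RCLike 𝕜] {H : C(X, Y)}
    (hH : ¬ Injective H) : ¬ Surjective fun g : C(Y, 𝕜) => g.comp H := by
  intro hsurj
  obtain ⟨x₁, x₂, hH₁₂, hne⟩ : ∃ x₁ x₂, H x₁ = H x₂ ∧ x₁ ≠ x₂ := by
    simpa [Injective] using hH
  obtain ⟨φ, hφ, hφ₁₂⟩ := separatesPoints_continuous_of_t35Space hne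
  obtain ⟨g, hg⟩ := hsurj ⟨fun x => (φ x : 𝕜), RCLike.continuous_ofReal.comp hφ⟩
  apply hφ₁₂
  have h_eq : (φ x₁ : 𝕜) = φ x₂ :=
    calc (φ x₁ : 𝕜) = g (H x₁) := (congrArg (· x₁) hg).symm
      _ = g (H x₂) := by rw [hH₁₂]
      _ = φ x₂ := congrArg (· x₂) hg
  exact_mod_cast h_eq

theorem ContinuousMap.norm_comp_of_surjective {X Y E : Type*} [TopologicalSpace X]
    [CompactSpace X] [TopologicalSpace Y] [CompactSpace Y] [SeminormedAddCommGroup E]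
    (g : C(Y, E)) {e : C(X, Y)} (he : Surjective e) : ‖g.comp e‖ = ‖g‖ := by
  rw [norm_eq_iSup_norm, norm_eq_iSup_norm]
  exact he.iSup_comp fun y => ‖g y‖

/-- For an uncountable discrete space Γ, the Banach algebra
C(Γ ∪ {∞}, ℂ) on the one-point compactification admits a non-surjective continuous
linear operator which agrees at each point with some algebra automorphism (which is
also a surjective linear isometry); hence the isometry group and the automorphism
group of C(Γ ∪ {∞}, ℂ) are not algebraically reflexive. -/
theorem onePoint_uncountable_isometry_and_automorphism_groups_not_algebraically_reflexive
    (Γ : Type*) [TopologicalSpace Γ] [DiscreteTopology Γ] [Uncountable Γ] :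
    ∃ T : C(OnePoint Γ, ℂ) →L[ℂ] C(OnePoint Γ, ℂ),
      ¬ Function.Surjective T ∧
      ∀ f : C(OnePoint Γ, ℂ), ∃ χ : C(OnePoint Γ, ℂ) ≃ₐ[ℂ] C(OnePoint Γ, ℂ),
        (∀ g : C(OnePoint Γ, ℂ), ‖χ g‖ = ‖g‖) ∧ T f = χ f := by
  obtain ⟨k⟩ : Nonempty (Γ ≃ OnePoint Γ) := Cardinal.eq.mp mk_onePoint_of_infinite.symm
  let H : C(OnePoint Γ, OnePoint Γ) := continuousMapMkDiscrete (k ·) ∞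
    (k.injective.tendsto_cofinite.mono_right cofinite_le_nhds_infty)
  let T : C(OnePoint Γ, ℂ) →L[ℂ] C(OnePoint Γ, ℂ) :=
    ⟨(ContinuousMap.compRightAlgHom ℂ ℂ H).toLinearMap,
      ContinuousMap.compRightAlgHom_continuous ℂ ℂ H⟩
  have hH : ¬ Injective H := fun h =>
    coe_ne_infty (k.symm ∞) (@h (k.symm ∞) ∞ (k.apply_symm_apply ∞))
  refine ⟨T, ContinuousMap.not_surjective_compRight_of_not_injective hH, fun f => ?_⟩
  have hlt : #{y | f y ≠ f ∞} < #Γ :=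
    (countable_setOf_ne_infty f).le_aleph0.trans_lt aleph0_lt_mk
  obtain ⟨π, hπ⟩ := exists_perm_comp_eq_comp k.injective coe_injective
    (k.surjective.range_eq ▸ subset_univ _)
    (fun y hy => ne_infty_iff_exists.mp (ne_of_apply_ne f hy)) hlt
  let E : OnePoint Γ ≃ₜ OnePoint Γ := π.toHomeomorphOfDiscrete.onePointCongr
  refine ⟨(E.compStarAlgEquiv' ℂ ℂ).toAlgEquiv,
    fun g => g.norm_comp_of_surjective (e := (E : C(OnePoint Γ, OnePoint Γ))) E.surjective, ?_⟩
  ext x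
  induction x using OnePoint.rec with
  | infty => rfl
  | coe γ => exact (congrFun hπ γ).symm
end
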